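/- arXiv:2205.04244 — 3 statements merged into one kernel-verified Lean document; each statement's English description precedes it below -/
import Mathlib

section
/- Let (X, T) and (Y, S) be flows on compact metric spaces with metrics d and d′ respectively, let ρ be a T-invariant Borel probability measure on X and ν an S-invariant Borel probability measure on Y, and let u(n) be an increasing sequence with 1 ≤ u(n) → ∞. Suppose (X, 𝔅_X, T, ρ) is measurably isomorphic to (Y, 𝔅_Y, S, ν). Then the measure complexity of (X, d, T, ρ) is weaker than u(n) if and only if the measure complexity of (Y, d′, S, ν) is weaker than u(n). -/
open MeasureTheory Filter

/-- The Bowen-type averaged distance `d̄_n(x,y) = (1/n) ∑_{j<n} d(T^j x, T^j y)`. -/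
noncomputable def dbar {X : Type*} (T : X → X) (d : X → X → ℝ) (n : ℕ) (x y : X) : ℝ :=
  (n : ℝ)⁻¹ * ∑ j ∈ Finset.range n, d (T^[j] x) (T^[j] y)

/-- `s_n(X, T, d, ρ, ε)`: the minimal number `m` of `d̄_n`-balls of radius `ε`
whose union has `ρ`-measure greater than `1 - ε`. -/
noncomputable def sComplexity {X : Type*} [MeasurableSpace X] (T : X → X)
    (d : X → X → ℝ) (ρ : Measure X) (n : ℕ) (ε : ℝ) : ℕ :=
  sInf {m : ℕ | ∃ c : Fin m → X,
    ENNReal.ofReal (1 - ε) < ρ (⋃ i, {y | dbar T d n (c i) y < ε})}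

/-- The measure complexity of `(X, d, T, ρ)` is weaker than `u(n)`:
`liminf_n s_n(X,T,d,ρ,ε)/u(n) = 0` for every `ε > 0`, phrased as: for all
`ε, δ > 0`, frequently `s_n < δ·u(n)`. -/
def ComplexityWeakerThan {X : Type*} [MeasurableSpace X] (T : X → X)
    (d : X → X → ℝ) (ρ : Measure X) (u : ℕ → ℝ) : Prop :=
  ∀ ε > (0 : ℝ), ∀ δ > (0 : ℝ), ∃ᶠ n in atTop,
    (sComplexity T d ρ n ε : ℝ) < δ * u n

/-- The measure complexity of `(X, d, T, ρ)` is sub-polynomial: it is weaker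
than `n^τ` for every `τ > 0`. -/
def SubPolynomialComplexity {X : Type*} [MeasurableSpace X] (T : X → X)
    (d : X → X → ℝ) (ρ : Measure X) : Prop :=
  ∀ τ : ℝ, 0 < τ → ComplexityWeakerThan T d ρ (fun n => (n : ℝ) ^ τ)

/-- `d` is a compatible metric on the topological space `X`: it is a metric
inducing the given topology (the `d`-balls around each point form a
neighbourhood basis). -/
structure IsCompatibleMetric {X : Type*} [TopologicalSpace X] (d : X → X → ℝ) : Prop where
  self : ∀ x, d x x = 0
  eq_of_dist_eq_zero : ∀ x y, d x y = 0 → x = y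
  symm : ∀ x y, d x y = d y x
  triangle : ∀ x y z, d x z ≤ d x y + d y z
  nhds_basis : ∀ x : X, (nhds x).HasBasis (fun ε : ℝ => 0 < ε) (fun ε => {y | d x y < ε})

/-- `(X, 𝔅_X, T, ρ)` is measurably isomorphic to `(Y, 𝔅_Y, S, ν)`: there are
full-measure invariant sets `X' ⊆ X`, `Y' ⊆ Y` and an invertible
measure-preserving map `θ : X' → Y'` intertwining `T` and `S`. -/
def MeasurablyIsomorphic {X Y : Type*} [MeasurableSpace X] [MeasurableSpace Y]
    (T : X → X) (ρ : Measure X) (S : Y → Y) (ν : Measure Y) : Prop :=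
  ∃ (X' : Set X) (Y' : Set Y) (θ : X → Y) (θ' : Y → X),
    MeasurableSet X' ∧ MeasurableSet Y' ∧ ρ X' = 1 ∧ ν Y' = 1 ∧
    Set.MapsTo T X' X' ∧ Set.MapsTo S Y' Y' ∧
    Set.MapsTo θ X' Y' ∧ Set.MapsTo θ' Y' X' ∧
    (∀ x ∈ X', θ' (θ x) = x) ∧ (∀ y ∈ Y', θ (θ' y) = y) ∧
    Measurable (fun x : X' => θ (x : X)) ∧ Measurable (fun y : Y' => θ' (y : Y)) ∧
    (∀ B : Set Y, MeasurableSet B → ρ (X' ∩ θ ⁻¹' B) = ν B) ∧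
    (∀ x ∈ X', θ (T x) = S (θ x))


open scoped ENNReal NNReal Topology Classical

section AuxBasic
variable {X : Type*} [MetricSpace X] (T : X → X) (n : ℕ)

lemma dbar_self' (x : X) : dbar T dist n x x = 0 := by simp [dbar]

lemma dbar_triangle' (x y z : X) :
    dbar T dist n x z ≤ dbar T dist n x y + dbar T dist n y z := by
  rw [dbar, dbar, dbar, ← mul_add, ← Finset.sum_add_distrib]
  apply mul_le_mul_of_nonneg_left (Finset.sum_le_sum fun j _ => dist_triangle _ _ _) (by positivity)

lemma dbar_comm' (x y : X) : dbar T dist n x y = dbar T dist n y x := by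
  unfold dbar; congr 1; apply Finset.sum_congr rfl; intro j _; exact dist_comm _ _

lemma continuous_dbar (hT : Continuous T) (x : X) : Continuous (dbar T dist n x) := by
  apply Continuous.mul continuous_const
  exact continuous_finset_sum _ fun j _ => (Continuous.dist (continuous_const) (hT.iterate j))

lemma isOpen_dbar_ball (hT : Continuous T) (x : X) (ε : ℝ) :
    IsOpen {y | dbar T dist n x y < ε} :=
  isOpen_lt (continuous_dbar T n hT x) continuous_const

variable [MeasurableSpace X] [BorelSpace X] (ρ : Measure X) [IsProbabilityMeasure ρ]

omit [BorelSpace X] in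
lemma sComplexity_le_of_mem {ε : ℝ} {m : ℕ} (c : Fin m → X)
    (h : ENNReal.ofReal (1 - ε) < ρ (⋃ i, {y | dbar T dist n (c i) y < ε})) :
    sComplexity T dist ρ n ε ≤ m :=
  Nat.sInf_le ⟨c, h⟩

lemma sComplexity_spec [CompactSpace X] (hT : Continuous T) {ε : ℝ} (hε : 0 < ε) :
    ∃ c : Fin (sComplexity T dist ρ n ε) → X,
      ENNReal.ofReal (1 - ε) < ρ (⋃ i, {y | dbar T dist n (c i) y < ε}) := by
  apply Nat.sInf_mem (s := {m : ℕ | ∃ c : Fin m → X,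
    ENNReal.ofReal (1 - ε) < ρ (⋃ i, {y | dbar T dist n (c i) y < ε})})
  obtain ⟨s, hs⟩ := IsCompact.elim_finite_subcover isCompact_univ
    (fun x : X => {y | dbar T dist n x y < ε}) (fun x => isOpen_dbar_ball T n hT x ε)
    (fun x _ => Set.mem_iUnion.2 ⟨x, by simp [dbar_self', hε]⟩)
  refine ⟨s.card, fun i => (s.equivFin.symm i : X), ?_⟩
  have hcov : (Set.univ : Set X) ⊆ ⋃ i : Fin s.card,
      {y | dbar T dist n ((s.equivFin.symm i : X)) y < ε} := by
    intro x hx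
    obtain ⟨z, hzs, hxz⟩ := Set.mem_iUnion₂.1 (hs hx)
    refine Set.mem_iUnion.2 ⟨s.equivFin ⟨z, hzs⟩, ?_⟩
    simpa using hxz
  have : ρ (⋃ i : Fin s.card, {y | dbar T dist n ((s.equivFin.symm i : X)) y < ε}) = 1 := by
    rw [← measure_univ (μ := ρ)]
    exact le_antisymm (measure_mono (Set.subset_univ _)) (measure_mono hcov)
  rw [this]
  exact ENNReal.ofReal_lt_one.2 (by linarith)

lemma sComplexity_anti [CompactSpace X] (hT : Continuous T) {ε ε' : ℝ} (hε : 0 < ε) (h : ε ≤ ε') :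
    sComplexity T dist ρ n ε' ≤ sComplexity T dist ρ n ε := by
  obtain ⟨c, hc⟩ := sComplexity_spec T n ρ hT hε
  apply sComplexity_le_of_mem T n ρ c
  calc ENNReal.ofReal (1 - ε') ≤ ENNReal.ofReal (1 - ε) := ENNReal.ofReal_le_ofReal (by linarith)
    _ < ρ (⋃ i, {y | dbar T dist n (c i) y < ε}) := hc
    _ ≤ _ := measure_mono (Set.iUnion_mono fun i y hy => lt_of_lt_of_le hy h)

end AuxBasic

section Lusin

lemma lusin_simpleFunc {X Y : Type*} [MetricSpace X] [CompactSpace X] [MeasurableSpace X]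
    [BorelSpace X] [TopologicalSpace Y] [MeasurableSpace Y]
    (ρ : Measure X) [IsProbabilityMeasure ρ] (f : SimpleFunc X Y) {κ : ℝ≥0∞} (hκ : κ ≠ 0) :
    ∃ K : Set X, IsCompact K ∧ ρ Kᶜ ≤ κ ∧ ContinuousOn f K := by
  classical
  set V := f.range with hV
  have hfiber : ∀ y : Y, MeasurableSet (f ⁻¹' {y}) := f.measurableSet_fiber
  have hsub : ∀ y ∈ V, ∃ F : Set X, F ⊆ f ⁻¹' {y} ∧ IsClosed F ∧
      ρ (f ⁻¹' {y}) < ρ F + κ / V.card := by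
    intro y hy
    have hne : κ / V.card ≠ 0 := by
      simp only [ne_eq, ENNReal.div_eq_zero_iff, hκ, false_or]
      exact ENNReal.natCast_ne_top _
    exact (hfiber y).exists_isClosed_lt_add (measure_ne_top ρ _) hne
  choose F hFsub hFcl hFmeas using hsub
  refine ⟨⋃ y ∈ V.attach, F y y.2, ?_, ?_, ?_⟩
  · apply IsClosed.isCompact
    exact isClosed_biUnion_finset fun y _ => hFcl y y.2
  · have hcover : (⋃ y ∈ V.attach, F y y.2)ᶜ ⊆ ⋃ y ∈ V.attach, (f ⁻¹' {y.1} \ F y y.2) := by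
      intro x hx
      have hyV : f x ∈ V := f.mem_range_self x
      refine Set.mem_iUnion₂.2 ⟨⟨f x, hyV⟩, V.mem_attach _, rfl, ?_⟩
      intro hxF
      exact hx (Set.mem_iUnion₂.2 ⟨⟨f x, hyV⟩, V.mem_attach _, hxF⟩)
    refine le_trans (measure_mono hcover) ?_
    refine le_trans (measure_biUnion_finset_le _ _) ?_
    have hbound : ∀ y ∈ V.attach, ρ (f ⁻¹' {y.1} \ F y.1 y.2) ≤ κ / V.card := by
      intro y _
      rw [measure_diff (hFsub y.1 y.2) (hFcl y.1 y.2).measurableSet.nullMeasurableSet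
        (measure_ne_top ρ _)]
      exact tsub_le_iff_left.2 (hFmeas y.1 y.2).le
    refine le_trans (Finset.sum_le_sum hbound) ?_
    rw [Finset.sum_const, Finset.card_attach, nsmul_eq_mul]
    exact ENNReal.mul_div_le
  · intro x hx
    obtain ⟨y, _, hxF⟩ := Set.mem_iUnion₂.1 hx
    have hfx : f x = y.1 := hFsub y.1 y.2 hxF
    set U := (⋃ z ∈ V.attach.filter (· ≠ y), F z.1 z.2)ᶜ with hU
    have hUopen : IsOpen U := (isClosed_biUnion_finset fun z _ => hFcl z.1 z.2).isOpen_compl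
    have hxU : x ∈ U := by
      intro hmem
      obtain ⟨z, hz, hxz⟩ := Set.mem_iUnion₂.1 hmem
      have : f x = z.1 := hFsub z.1 z.2 hxz
      have hzy : z ≠ y := (Finset.mem_filter.1 hz).2
      exact hzy (Subtype.ext (by rw [← this, hfx]))
    have hconst : ∀ w ∈ (⋃ y ∈ V.attach, F y y.2) ∩ U, f w = f x := by
      rintro w ⟨hwK, hwU⟩
      obtain ⟨z, _, hwz⟩ := Set.mem_iUnion₂.1 hwK
      by_cases hzy : z = y
      · rw [hfx, ← hzy]; exact hFsub z.1 z.2 hwz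
      · exact absurd (Set.mem_iUnion₂.2 ⟨z, Finset.mem_filter.2 ⟨V.mem_attach _, hzy⟩, hwz⟩) hwU
    have hev : ∀ᶠ w in nhdsWithin x (⋃ y ∈ V.attach, F y y.2), f w = f x := by
      filter_upwards [inter_mem_nhdsWithin _ (hUopen.mem_nhds hxU)] with w hw
      exact hconst w ⟨hw.1, hw.2⟩
    exact Filter.Tendsto.congr' (Filter.EventuallyEq.symm hev) tendsto_const_nhds

theorem lusin {X Y : Type*} [MetricSpace X] [CompactSpace X] [MeasurableSpace X] [BorelSpace X]
    [MetricSpace Y] [CompactSpace Y] [MeasurableSpace Y] [BorelSpace Y]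
    (ρ : Measure X) [IsProbabilityMeasure ρ] (f : X → Y) (hf : Measurable f)
    {κ : ℝ} (hκ : 0 < κ) :
    ∃ K : Set X, IsCompact K ∧ ρ Kᶜ ≤ ENNReal.ofReal κ ∧ ContinuousOn f K := by
  have hXne : Nonempty X := by
    by_contra h
    rw [not_nonempty_iff] at h
    have := measure_univ (μ := ρ)
    simp [Set.univ_eq_empty_iff.2 h] at this
  obtain ⟨x₀⟩ := hXne
  set y₀ := f x₀
  set fs : ℕ → SimpleFunc X Y := SimpleFunc.approxOn f hf Set.univ y₀ (Set.mem_univ _)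
  have htendsto : ∀ x, Tendsto (fun m => fs m x) atTop (𝓝 (f x)) := fun x =>
    SimpleFunc.tendsto_approxOn hf (Set.mem_univ _) (by simp)
  obtain ⟨t, htm, htμ, hunif⟩ := tendstoUniformlyOn_of_ae_tendsto' (μ := ρ)
    (fun m => (fs m).stronglyMeasurable) hf.stronglyMeasurable
    (Filter.Eventually.of_forall htendsto) (show (0:ℝ) < κ/3 by linarith)
  obtain ⟨F, hFsub, hFcl, hFlt⟩ := htm.compl.exists_isClosed_lt_add (measure_ne_top ρ _)
    (show ENNReal.ofReal (κ/3) ≠ 0 by simp only [ne_eq, ENNReal.ofReal_eq_zero, not_le]; linarith)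
  have hC : ∀ m : ℕ, ∃ C : Set X, IsCompact C ∧
      ρ Cᶜ ≤ ENNReal.ofReal (κ/3) * (2⁻¹ : ℝ≥0∞) ^ (m+1) ∧ ContinuousOn (fs m) C := by
    intro m
    apply lusin_simpleFunc ρ (fs m)
    apply mul_ne_zero
    · simp only [ne_eq, ENNReal.ofReal_eq_zero, not_le]; linarith
    · exact pow_ne_zero _ (by norm_num)
  choose C hCcomp hCμ hCcont using hC
  refine ⟨F ∩ ⋂ m, C m, ?_, ?_, ?_⟩
  · exact (hFcl.inter (isClosed_iInter fun m => (hCcomp m).isClosed)).isCompact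
  · have hsub : (F ∩ ⋂ m, C m)ᶜ ⊆ (t ∪ (tᶜ \ F)) ∪ ⋃ m, (C m)ᶜ := by
      intro x hx
      rw [Set.compl_inter, Set.compl_iInter] at hx
      rcases hx with hx | hx
      · by_cases hxt : x ∈ t
        · exact Or.inl (Or.inl hxt)
        · exact Or.inl (Or.inr ⟨hxt, hx⟩)
      · exact Or.inr hx
    refine le_trans (measure_mono hsub) ?_
    refine le_trans (measure_union_le _ _) ?_
    have h1 : ρ (t ∪ (tᶜ \ F)) ≤ ENNReal.ofReal (κ/3) + ENNReal.ofReal (κ/3) := by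
      refine le_trans (measure_union_le _ _) (add_le_add htμ ?_)
      rw [measure_diff hFsub hFcl.measurableSet.nullMeasurableSet (measure_ne_top ρ _)]
      exact tsub_le_iff_left.2 hFlt.le
    have h2 : ρ (⋃ m, (C m)ᶜ) ≤ ENNReal.ofReal (κ/3) := by
      refine le_trans (measure_iUnion_le _) ?_
      refine le_trans (ENNReal.tsum_le_tsum hCμ) ?_
      rw [ENNReal.tsum_mul_left]
      have hgeo : ∑' m : ℕ, (2⁻¹ : ℝ≥0∞) ^ (m+1) = 1 := by
        have := ENNReal.tsum_geometric (2⁻¹ : ℝ≥0∞)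
        calc ∑' m : ℕ, (2⁻¹ : ℝ≥0∞) ^ (m+1) = ∑' m : ℕ, (2⁻¹ : ℝ≥0∞) * (2⁻¹) ^ m := by
              congr 1; funext m; ring
          _ = (2⁻¹ : ℝ≥0∞) * (1 - 2⁻¹)⁻¹ := by rw [ENNReal.tsum_mul_left, this]
          _ = 1 := by rw [ENNReal.one_sub_inv_two, inv_inv]; exact ENNReal.inv_mul_cancel (by norm_num) (by norm_num)
      rw [hgeo, mul_one]
    calc ρ (t ∪ (tᶜ \ F)) + ρ (⋃ m, (C m)ᶜ)
        ≤ (ENNReal.ofReal (κ/3) + ENNReal.ofReal (κ/3)) + ENNReal.ofReal (κ/3) :=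
          add_le_add h1 h2
      _ ≤ ENNReal.ofReal κ := by
          rw [← ENNReal.ofReal_add (by linarith) (by linarith),
            ← ENNReal.ofReal_add (by linarith) (by linarith)]
          exact ENNReal.ofReal_le_ofReal (by linarith)
  · have hKt : F ∩ ⋂ m, C m ⊆ tᶜ := fun x hx => hFsub hx.1
    refine TendstoUniformlyOn.continuousOn (hunif.mono hKt) ?_
    exact (Filter.Eventually.of_forall (f := atTop) fun m =>
      (hCcont m).mono fun x (hx : x ∈ F ∩ ⋂ k, C k) => (Set.mem_iInter.1 hx.2 m)) |>.frequently

end Lusin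

section Markov

lemma visit_freq {X : Type*} [MeasurableSpace X] (ρ : Measure X) [IsProbabilityMeasure ρ]
    (T : X → X) (hT : Measurable T) (hρT : MeasurePreserving T ρ ρ)
    (K : Set X) (hK : MeasurableSet K) {β κ : ℝ} (hβ : 0 < β) (hκ : 0 ≤ κ)
    (hKμ : ρ Kᶜ ≤ ENNReal.ofReal κ) {n : ℕ} (hn : 1 ≤ n) :
    ρ {x | (β * n : ℝ) <
        (((Finset.range n).filter (fun j => T^[j] x ∉ K)).card : ℝ)} ≤
      ENNReal.ofReal (κ / β) := by
  classical
  set f : X → ℝ≥0∞ := fun x => ∑ j ∈ Finset.range n,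
    (Kᶜ).indicator (fun _ => (1 : ℝ≥0∞)) (T^[j] x) with hf
  have hfm : Measurable f := by
    apply Finset.measurable_sum
    intro j _
    exact (measurable_const.indicator hK.compl).comp (hT.iterate j)
  have hfeq : ∀ x, f x = (((Finset.range n).filter (fun j => T^[j] x ∉ K)).card : ℝ≥0∞) := by
    intro x
    rw [hf]
    simp only [Set.indicator_apply, Set.mem_compl_iff]
    rw [Finset.card_filter]
    push_cast
    congr 1
  have hint : ∫⁻ x, f x ∂ρ = n * ρ Kᶜ := by
    simp only [hf]
    rw [lintegral_finset_sum _ (fun j _ => show Measurable fun x => (Kᶜ).indicator (fun _ => (1:ℝ≥0∞)) (T^[j] x) from (measurable_const.indicator hK.compl).comp (hT.iterate j))]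
    have : ∀ j, ∫⁻ x, (Kᶜ).indicator (fun _ => (1 : ℝ≥0∞)) (T^[j] x) ∂ρ = ρ Kᶜ := by
      intro j
      rw [(hρT.iterate j).lintegral_comp (measurable_const.indicator hK.compl)]
      exact lintegral_indicator_one hK.compl
    simp [this, Finset.sum_const]
  have hsub : {x | (β * n : ℝ) <
      (((Finset.range n).filter (fun j => T^[j] x ∉ K)).card : ℝ)} ⊆
      {x | ENNReal.ofReal (β * n) ≤ f x} := by
    intro x hx
    rw [Set.mem_setOf_eq, hfeq]
    calc ENNReal.ofReal (β * n) ≤ ENNReal.ofReal (((Finset.range n).filter (fun j => T^[j] x ∉ K)).card : ℝ) := ENNReal.ofReal_le_ofReal (le_of_lt hx)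
      _ = _ := ENNReal.ofReal_natCast _
  have hβn : (0:ℝ) < β * n := by
    have : (1:ℝ) ≤ n := by exact_mod_cast hn
    nlinarith
  calc ρ _ ≤ ρ {x | ENNReal.ofReal (β * n) ≤ f x} := measure_mono hsub
    _ ≤ (∫⁻ x, f x ∂ρ) / ENNReal.ofReal (β * n) :=
        meas_ge_le_lintegral_div hfm.aemeasurable
          (by simp [ENNReal.ofReal_eq_zero]; linarith) ENNReal.ofReal_ne_top
    _ = (n * ρ Kᶜ) / ENNReal.ofReal (β * n) := by rw [hint]
    _ ≤ (n * ENNReal.ofReal κ) / ENNReal.ofReal (β * n) := by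
        gcongr
    _ = ENNReal.ofReal (n * κ) / ENNReal.ofReal (β * n) := by
        congr 1
        rw [ENNReal.ofReal_mul (by positivity : (0:ℝ) ≤ (n:ℝ)), ENNReal.ofReal_natCast]
    _ = ENNReal.ofReal ((n * κ) / (β * n)) := (ENNReal.ofReal_div_of_pos hβn).symm
    _ = ENNReal.ofReal (κ / β) := by
        congr 1
        field_simp

end Markov

section Helpers
variable {X Y : Type*} [MeasurableSpace X] [MeasurableSpace Y]

lemma measurable_extend_of_subtype {X' : Set X} (hX' : MeasurableSet X') {θ : X → Y}
    (hm : Measurable (fun x : X' => θ (x : X))) (y0 : Y) :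
    Measurable (fun x => if x ∈ X' then θ x else y0) := by
  intro B hB
  have h1 : MeasurableSet (Subtype.val '' ((fun x : X' => θ (x : X)) ⁻¹' B)) :=
    MeasurableSet.subtype_image hX' (hm hB)
  by_cases hy : y0 ∈ B
  · have heq : (fun x => if x ∈ X' then θ x else y0) ⁻¹' B =
        (Subtype.val '' ((fun x : X' => θ (x : X)) ⁻¹' B)) ∪ X'ᶜ := by
      ext x
      by_cases hx : x ∈ X' <;>
        simp [Set.mem_image, Set.mem_preimage, hx, hy]
    rw [heq]; exact h1.union hX'.compl
  · have heq : (fun x => if x ∈ X' then θ x else y0) ⁻¹' B =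
        Subtype.val '' ((fun x : X' => θ (x : X)) ⁻¹' B) := by
      ext x
      by_cases hx : x ∈ X' <;>
        simp [Set.mem_image, Set.mem_preimage, hx, hy]
    rw [heq]; exact h1

lemma measurable_inter_preimage_of_subtype {Y' : Set Y} (hY' : MeasurableSet Y') {θ' : Y → X}
    (hm : Measurable (fun y : Y' => θ' (y : Y))) {A : Set X} (hA : MeasurableSet A) :
    MeasurableSet (Y' ∩ θ' ⁻¹' A) := by
  have h1 : MeasurableSet (Subtype.val '' ((fun y : Y' => θ' (y : Y)) ⁻¹' A)) :=
    MeasurableSet.subtype_image hY' (hm hA)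
  have heq : Y' ∩ θ' ⁻¹' A = Subtype.val '' ((fun y : Y' => θ' (y : Y)) ⁻¹' A) := by
    ext y
    simp [Set.mem_image, Set.mem_preimage]
    tauto
  rw [heq]; exact h1

omit [MeasurableSpace X] [MeasurableSpace Y] in
lemma conj_iterate {X' : Set X} {T : X → X} {S : Y → Y} {θ : X → Y}
    (hTX' : Set.MapsTo T X' X') (hconj : ∀ x ∈ X', θ (T x) = S (θ x)) :
    ∀ x ∈ X', ∀ j, θ (T^[j] x) = S^[j] (θ x) := by
  intro x hx j
  induction j with
  | zero => simp
  | succ j ih =>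
    rw [Function.iterate_succ_apply', Function.iterate_succ_apply',
      hconj _ (hTX'.iterate j hx), ih]

end Helpers

section Estimate

lemma dbar_transfer_est {X Y : Type*} [MetricSpace X] [MetricSpace Y]
    (T : X → X) (S : Y → Y) (θ : X → Y) (X' K : Set X) (n : ℕ)
    {η ε D β γ : ℝ} (hη : 0 < η) (hε : 0 < ε) (hD0 : 0 ≤ D)
    (hD : ∀ y y' : Y, dist y y' ≤ D)
    (hconj : ∀ x ∈ X', ∀ j, θ (T^[j] x) = S^[j] (θ x))
    (hUC : ∀ p ∈ K, ∀ q ∈ K, dist p q < η → dist (θ p) (θ q) < ε/4)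
    (hnum : ε/4 + (2*β+γ)*D < ε)
    {x y : X} (hx : x ∈ X') (hy : y ∈ X')
    (hxK : (((Finset.range n).filter (fun j => T^[j] x ∉ K)).card : ℝ) ≤ β * n)
    (hyK : (((Finset.range n).filter (fun j => T^[j] y ∉ K)).card : ℝ) ≤ β * n)
    (hd : dbar T dist n x y < η * γ) :
    dbar S dist n (θ x) (θ y) < ε := by
  by_cases hn : n = 0
  · simp [dbar, hn, hε]
  have hn' : 0 < (n : ℝ) := by positivity
  have hsum : ∑ j ∈ Finset.range n, dist (T^[j] x) (T^[j] y) = n * dbar T dist n x y := by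
    rw [dbar]; field_simp
  set F := (Finset.range n).filter (fun j => η ≤ dist (T^[j] x) (T^[j] y)) with hF
  have hFcard : (F.card : ℝ) * η ≤ n * dbar T dist n x y := by
    rw [← hsum]
    calc (F.card : ℝ) * η = ∑ _j ∈ F, η := by rw [Finset.sum_const, nsmul_eq_mul]
      _ ≤ ∑ j ∈ F, dist (T^[j] x) (T^[j] y) :=
          Finset.sum_le_sum fun j hj => (Finset.mem_filter.1 hj).2
      _ ≤ ∑ j ∈ Finset.range n, dist (T^[j] x) (T^[j] y) :=
          Finset.sum_le_sum_of_subset_of_nonneg (Finset.filter_subset _ _)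
            (fun j _ _ => dist_nonneg)
  have hFlt : (F.card : ℝ) < γ * n := by
    by_contra h
    push_neg at h
    have h1 : (F.card : ℝ) * η ≥ γ * n * η := by nlinarith
    have h2 : n * dbar T dist n x y < n * (η * γ) := by nlinarith
    nlinarith
  set p : ℕ → Prop := fun j => ¬(T^[j] x ∈ K ∧ T^[j] y ∈ K ∧ dist (T^[j] x) (T^[j] y) < η)
    with hp
  set Bad := (Finset.range n).filter p with hBad
  have hBadsub : Bad ⊆ ((Finset.range n).filter (fun j => T^[j] x ∉ K) ∪
      (Finset.range n).filter (fun j => T^[j] y ∉ K)) ∪ F := by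
    intro j hj
    obtain ⟨hjr, hjp⟩ := Finset.mem_filter.1 hj
    rw [hp] at hjp
    push_neg at hjp
    by_cases h1 : T^[j] x ∈ K
    · by_cases h2 : T^[j] y ∈ K
      · exact Finset.mem_union.2 (Or.inr (Finset.mem_filter.2 ⟨hjr, hjp h1 h2⟩))
      · exact Finset.mem_union.2 (Or.inl (Finset.mem_union.2 (Or.inr
          (Finset.mem_filter.2 ⟨hjr, h2⟩))))
    · exact Finset.mem_union.2 (Or.inl (Finset.mem_union.2 (Or.inl
        (Finset.mem_filter.2 ⟨hjr, h1⟩))))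
  have hBadcard : (Bad.card : ℝ) ≤ 2 * β * n + γ * n := by
    have h1 := Finset.card_le_card hBadsub
    have h2 := Finset.card_union_le ((Finset.range n).filter (fun j => T^[j] x ∉ K) ∪
      (Finset.range n).filter (fun j => T^[j] y ∉ K)) F
    have h3 := Finset.card_union_le ((Finset.range n).filter (fun j => T^[j] x ∉ K))
      ((Finset.range n).filter (fun j => T^[j] y ∉ K))
    have hnat : Bad.card ≤ ((Finset.range n).filter (fun j => T^[j] x ∉ K)).card
        + ((Finset.range n).filter (fun j => T^[j] y ∉ K)).card + F.card :=
      le_trans h1 (le_trans h2 (Nat.add_le_add_right h3 _))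
    have c1 : (Bad.card : ℝ) ≤ (((Finset.range n).filter (fun j => T^[j] x ∉ K)).card : ℝ)
        + (((Finset.range n).filter (fun j => T^[j] y ∉ K)).card : ℝ) + F.card := by
      exact_mod_cast hnat
    linarith
  have hsplit := Finset.sum_filter_add_sum_filter_not (Finset.range n) p
    (fun j => dist (S^[j] (θ x)) (S^[j] (θ y)))
  have hbad_est : ∑ j ∈ Bad, dist (S^[j] (θ x)) (S^[j] (θ y)) ≤ (Bad.card : ℝ) * D := by
    calc ∑ j ∈ Bad, dist (S^[j] (θ x)) (S^[j] (θ y)) ≤ ∑ _j ∈ Bad, D :=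
          Finset.sum_le_sum fun j _ => hD _ _
      _ = (Bad.card : ℝ) * D := by rw [Finset.sum_const, nsmul_eq_mul]
  have hgood_est : ∑ j ∈ (Finset.range n).filter (fun j => ¬ p j),
      dist (S^[j] (θ x)) (S^[j] (θ y)) ≤ (n : ℝ) * (ε/4) := by
    calc ∑ j ∈ (Finset.range n).filter (fun j => ¬ p j),
          dist (S^[j] (θ x)) (S^[j] (θ y))
        ≤ ∑ _j ∈ (Finset.range n).filter (fun j => ¬ p j), (ε/4) := by
          apply Finset.sum_le_sum
          intro j hj
          obtain ⟨hjr, hjp⟩ := Finset.mem_filter.1 hj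
          rw [hp, not_not] at hjp
          obtain ⟨h1, h2, h3⟩ := hjp
          rw [← hconj x hx j, ← hconj y hy j]
          exact (hUC _ h1 _ h2 h3).le
      _ ≤ (n : ℝ) * (ε/4) := by
          rw [Finset.sum_const, nsmul_eq_mul]
          have : (((Finset.range n).filter (fun j => ¬ p j)).card : ℝ) ≤ n := by
            have h := Finset.card_filter_le (Finset.range n) (fun j => ¬ p j)
            rw [Finset.card_range] at h
            exact_mod_cast h
          nlinarith
  have htot : ∑ j ∈ Finset.range n, dist (S^[j] (θ x)) (S^[j] (θ y)) ≤
      (n : ℝ) * (ε/4 + (2*β+γ)*D) := by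
    rw [← hsplit]
    have : (Bad.card : ℝ) * D ≤ (2 * β * n + γ * n) * D := by nlinarith
    nlinarith [hbad_est, hgood_est]
  rw [dbar]
  calc (n : ℝ)⁻¹ * ∑ j ∈ Finset.range n, dist (S^[j] (θ x)) (S^[j] (θ y))
      ≤ (n : ℝ)⁻¹ * ((n : ℝ) * (ε/4 + (2*β+γ)*D)) := by
        apply mul_le_mul_of_nonneg_left htot (by positivity)
    _ = ε/4 + (2*β+γ)*D := by field_simp
    _ < ε := hnum
end Estimate

section Transfer

lemma measurablyIsomorphic_symm {X Y : Type*} [MeasurableSpace X] [MeasurableSpace Y]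
    {T : X → X} {ρ : Measure X} {S : Y → Y} {ν : Measure Y} [IsProbabilityMeasure ρ]
    (hiso : MeasurablyIsomorphic T ρ S ν) : MeasurablyIsomorphic S ν T ρ := by
  obtain ⟨X', Y', θ, θ', hX'm, hY'm, hρX', hνY', hTX', hSY', hθmaps, hθ'maps, hθ'θ, hθθ',
    hθmeas, hθ'meas, hmeas_eq, hconj⟩ := hiso
  refine ⟨Y', X', θ', θ, hY'm, hX'm, hνY', hρX', hSY', hTX', hθ'maps, hθmaps, hθθ', hθ'θ,
    hθ'meas, hθmeas, ?_, ?_⟩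
  · intro A hA
    have hB : MeasurableSet (Y' ∩ θ' ⁻¹' A) :=
      measurable_inter_preimage_of_subtype hY'm hθ'meas hA
    have h1 := hmeas_eq _ hB
    have h2 : X' ∩ θ ⁻¹' (Y' ∩ θ' ⁻¹' A) = X' ∩ A := by
      ext x
      simp only [Set.mem_inter_iff, Set.mem_preimage]
      constructor
      · rintro ⟨hx, _, hθ'x⟩
        exact ⟨hx, by rwa [hθ'θ x hx] at hθ'x⟩
      · rintro ⟨hx, hxA⟩
        exact ⟨hx, hθmaps hx, by rwa [hθ'θ x hx]⟩
    rw [h2] at h1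
    rw [← h1]
    have hX'c : ρ X'ᶜ = 0 := by
      rw [prob_compl_eq_zero_iff hX'm]; exact hρX'
    apply le_antisymm (measure_mono Set.inter_subset_right)
    calc ρ A ≤ ρ (X' ∩ A) + ρ X'ᶜ := by
          refine le_trans (measure_mono ?_) (measure_union_le _ _)
          intro x hx
          by_cases h : x ∈ X'
          · exact Or.inl ⟨h, hx⟩
          · exact Or.inr h
      _ = ρ (X' ∩ A) := by rw [hX'c, add_zero]
  · intro y hy
    have h1 : θ' y ∈ X' := hθ'maps hy
    have h2 : θ (T (θ' y)) = S (θ (θ' y)) := hconj _ h1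
    rw [hθθ' y hy] at h2
    have h3 : T (θ' y) ∈ X' := hTX' h1
    calc θ' (S y) = θ' (θ (T (θ' y))) := by rw [h2]
      _ = T (θ' y) := hθ'θ _ h3

lemma sComplexity_transfer {X Y : Type*}
    [MetricSpace X] [CompactSpace X] [MetricSpace Y] [CompactSpace Y]
    [MeasurableSpace X] [BorelSpace X] [MeasurableSpace Y] [BorelSpace Y]
    (T : X → X) (hT : Continuous T) (S : Y → Y) (hS : Continuous S)
    (ρ : Measure X) [IsProbabilityMeasure ρ] (hρT : MeasurePreserving T ρ ρ)
    (ν : Measure Y) [IsProbabilityMeasure ν]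
    (hiso : MeasurablyIsomorphic T ρ S ν)
    {ε : ℝ} (hε : 0 < ε) (hε1 : ε ≤ 1/2) :
    ∃ ε₂ > 0, ∀ n, sComplexity S dist ν n ε ≤ sComplexity T dist ρ n ε₂ := by
  classical
  obtain ⟨X', Y', θ, θ', hX'm, hY'm, hρX', hνY', hTX', hSY', hθmaps, hθ'maps, hθ'θ, hθθ',
    hθmeas, hθ'meas, hmeas_eq, hconj0⟩ := hiso
  have hYne : Nonempty Y := by
    by_contra h
    rw [not_nonempty_iff] at h
    have := measure_univ (μ := ν)
    simp [Set.univ_eq_empty_iff.2 h] at this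
  obtain ⟨y0⟩ := hYne
  -- diameter bound
  set D : ℝ := Metric.diam (Set.univ : Set Y) + 1 with hD
  have hD1 : 1 ≤ D := by
    have := Metric.diam_nonneg (s := (Set.univ : Set Y))
    linarith
  have hD0 : 0 ≤ D := by linarith
  have hDbound : ∀ y y' : Y, dist y y' ≤ D := by
    intro y y'
    have := Metric.dist_le_diam_of_mem (isCompact_univ.isBounded)
      (Set.mem_univ y) (Set.mem_univ y')
    linarith
  set γ : ℝ := ε / (16 * D) with hγ
  have hγpos : 0 < γ := by rw [hγ]; apply div_pos hε; nlinarith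
  set κ : ℝ := γ * ε / 4 with hκ
  have hκpos : 0 < κ := by rw [hκ]; positivity
  have hX'c : ρ X'ᶜ = 0 := by rw [prob_compl_eq_zero_iff hX'm]; exact hρX'
  obtain ⟨K, η, hKcomp, hKX', hKμ, hηpos, hUCθ⟩ :
      ∃ (K : Set X) (η : ℝ), IsCompact K ∧ K ⊆ X' ∧ ρ Kᶜ ≤ ENNReal.ofReal κ ∧ 0 < η ∧
        ∀ p ∈ K, ∀ q ∈ K, dist p q < η → dist (θ p) (θ q) < ε/4 := by
    set θt : X → Y := fun x => if x ∈ X' then θ x else y0 with hθt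
    have hθtm : Measurable θt := measurable_extend_of_subtype hX'm hθmeas y0
    obtain ⟨K₂, hK₂c, hK₂μ, hK₂cont⟩ := lusin ρ θt hθtm (show (0:ℝ) < κ/2 by linarith)
    obtain ⟨K₁, hK₁sub, hK₁cl, hK₁lt⟩ := hX'm.exists_isClosed_lt_add (measure_ne_top ρ _)
      (show ENNReal.ofReal (κ/4) ≠ 0 by
        simp only [ne_eq, ENNReal.ofReal_eq_zero, not_le]; linarith)
    have hKcomp : IsCompact (K₁ ∩ K₂) := (hK₁cl.inter hK₂c.isClosed).isCompact
    have hKX' : K₁ ∩ K₂ ⊆ X' := fun x hx => hK₁sub hx.1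
    have hKμ : ρ (K₁ ∩ K₂)ᶜ ≤ ENNReal.ofReal κ := by
      have hsub : (K₁ ∩ K₂)ᶜ ⊆ (X'ᶜ ∪ (X' \ K₁)) ∪ K₂ᶜ := by
        intro x hx
        rw [Set.compl_inter] at hx
        rcases hx with hx | hx
        · by_cases h : x ∈ X'
          · exact Or.inl (Or.inr ⟨h, hx⟩)
          · exact Or.inl (Or.inl h)
        · exact Or.inr hx
      refine le_trans (measure_mono hsub) ?_
      refine le_trans (measure_union_le _ _) ?_
      have h1 : ρ (X'ᶜ ∪ (X' \ K₁)) ≤ ENNReal.ofReal (κ/4) := by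
        refine le_trans (measure_union_le _ _) ?_
        rw [hX'c, zero_add]
        rw [measure_diff hK₁sub hK₁cl.measurableSet.nullMeasurableSet (measure_ne_top ρ _)]
        exact tsub_le_iff_left.2 hK₁lt.le
      calc ρ (X'ᶜ ∪ (X' \ K₁)) + ρ K₂ᶜ ≤ ENNReal.ofReal (κ/4) + ENNReal.ofReal (κ/2) :=
            add_le_add h1 hK₂μ
        _ ≤ ENNReal.ofReal κ := by
            rw [← ENNReal.ofReal_add (by linarith) (by linarith)]
            exact ENNReal.ofReal_le_ofReal (by linarith)
    have hUCfull : UniformContinuousOn θt (K₁ ∩ K₂) :=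
      hKcomp.uniformContinuousOn_of_continuous (hK₂cont.mono fun x hx => hx.2)
    obtain ⟨η, hηpos, hUC⟩ := (Metric.uniformContinuousOn_iff).1 hUCfull (ε/4) (by linarith)
    refine ⟨K₁ ∩ K₂, η, hKcomp, hKX', hKμ, hηpos, ?_⟩
    intro p hp q hq hpq
    have h5 := hUC p hp q hq hpq
    simp only [hθt] at h5
    simpa [hKX' hp, hKX' hq] using h5
  have hnum : ε/4 + (2*γ+γ)*D < ε := by
    have hγD : γ * D = ε / 16 := by
      rw [hγ]; field_simp
    nlinarith
  set ε₂ : ℝ := min (η * γ / 2) (ε / 4) with hε₂def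
  have hε₂pos : 0 < ε₂ := lt_min (by positivity) (by linarith)
  have hε₂a : ε₂ ≤ η * γ / 2 := min_le_left _ _
  have hε₂b : ε₂ ≤ ε / 4 := min_le_right _ _
  refine ⟨ε₂, hε₂pos, fun n => ?_⟩
  have hconj : ∀ x ∈ X', ∀ j, θ (T^[j] x) = S^[j] (θ x) := conj_iterate hTX' hconj0
  obtain ⟨c, hc⟩ := sComplexity_spec T n ρ hT hε₂pos
  set U : Set X := ⋃ i, {y | dbar T dist n (c i) y < ε₂} with hU
  set An : Set X :=
    {x | (((Finset.range n).filter (fun j => T^[j] x ∉ K)).card : ℝ) ≤ γ * n} with hAn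
  have hκβ : κ / γ = ε / 4 := by
    rw [hκ, div_eq_iff hγpos.ne']; ring
  have hAnc : ρ Anᶜ ≤ ENNReal.ofReal (ε / 4) := by
    rcases Nat.eq_zero_or_pos n with h0 | hpos
    · have hemp : Anᶜ = ∅ := by
        ext x; simp [hAn, h0]
      rw [hemp]; simp
    · have hset : Anᶜ = {x | (γ * (n:ℝ)) <
          (((Finset.range n).filter (fun j => T^[j] x ∉ K)).card : ℝ)} := by
        ext x
        simp only [hAn, Set.mem_compl_iff, Set.mem_setOf_eq, not_le]
      rw [hset, ← hκβ]
      have hvf := visit_freq ρ T hT.measurable hρT K hKcomp.isClosed.measurableSet hγpos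
        (le_of_lt hκpos) hKμ hpos
      exact hvf
  set G : Set X := (X' ∩ An) ∩ U with hG
  set c' : Fin (sComplexity T dist ρ n ε₂) → Y := fun i =>
    if h : (G ∩ {z | dbar T dist n (c i) z < ε₂}).Nonempty then θ h.choose else y0 with hc'
  set B : Set Y := ⋃ i, {z | dbar S dist n (c' i) z < ε} with hB
  have hGB : G ⊆ X' ∩ θ ⁻¹' B := by
    intro x hxG
    obtain ⟨⟨hxX', hxAn⟩, hxU⟩ := hxG
    refine ⟨hxX', ?_⟩
    obtain ⟨i, hxi⟩ := Set.mem_iUnion.1 hxU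
    have hne : (G ∩ {z | dbar T dist n (c i) z < ε₂}).Nonempty :=
      ⟨x, ⟨⟨hxX', hxAn⟩, hxU⟩, hxi⟩
    obtain ⟨⟨⟨hwX', hwAn⟩, _⟩, hwb⟩ := hne.choose_spec
    have hci : c' i = θ hne.choose := dif_pos hne
    have hd : dbar T dist n hne.choose x < η * γ := by
      have htri := dbar_triangle' T n hne.choose (c i) x
      have hcomm : dbar T dist n hne.choose (c i) = dbar T dist n (c i) hne.choose :=
        dbar_comm' T n _ _
      have hxi' : dbar T dist n (c i) x < ε₂ := hxi
      have hwb' : dbar T dist n (c i) hne.choose < ε₂ := hwb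
      calc dbar T dist n hne.choose x
          ≤ dbar T dist n hne.choose (c i) + dbar T dist n (c i) x := htri
        _ < ε₂ + ε₂ := by rw [hcomm]; exact add_lt_add hwb' hxi'
        _ ≤ η * γ := by linarith
    have hest : dbar S dist n (θ hne.choose) (θ x) < ε := by
      refine dbar_transfer_est T S θ X' K n hηpos hε hD0 hDbound hconj hUCθ hnum
        hwX' hxX' ?_ ?_ hd
      · simpa only [hAn, Set.mem_setOf_eq, Finset.filter_congr_decidable] using hwAn
      · simpa only [hAn, Set.mem_setOf_eq, Finset.filter_congr_decidable] using hxAn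
    refine Set.mem_iUnion.2 ⟨i, ?_⟩
    rw [Set.mem_setOf_eq, hci]
    exact hest
  have hBmeas : MeasurableSet B :=
    (isOpen_iUnion fun i => isOpen_dbar_ball S n hS _ ε).measurableSet
  have hνB : ν B = ρ (X' ∩ θ ⁻¹' B) := (hmeas_eq B hBmeas).symm
  have hUG : U ⊆ (G ∪ X'ᶜ) ∪ Anᶜ := by
    intro x hx
    by_cases h1 : x ∈ X'
    · by_cases h2 : x ∈ An
      · exact Or.inl (Or.inl ⟨⟨h1, h2⟩, hx⟩)
      · exact Or.inr h2
    · exact Or.inl (Or.inr h1)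
  have h6 : ρ U ≤ ρ G + ENNReal.ofReal (ε/4) := by
    calc ρ U ≤ ρ ((G ∪ X'ᶜ) ∪ Anᶜ) := measure_mono hUG
      _ ≤ ρ (G ∪ X'ᶜ) + ρ Anᶜ := measure_union_le _ _
      _ ≤ (ρ G + ρ X'ᶜ) + ENNReal.ofReal (ε/4) := add_le_add (measure_union_le _ _) hAnc
      _ = ρ G + ENNReal.ofReal (ε/4) := by rw [hX'c, add_zero]
  have h7 : ENNReal.ofReal (1-ε) + ENNReal.ofReal (ε/4) ≤ ENNReal.ofReal (1-ε₂) := by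
    rw [← ENNReal.ofReal_add (by linarith) (by linarith)]
    exact ENNReal.ofReal_le_ofReal (by linarith)
  have h8 : ENNReal.ofReal (1-ε) + ENNReal.ofReal (ε/4) < ρ G + ENNReal.ofReal (ε/4) :=
    lt_of_le_of_lt h7 (lt_of_lt_of_le hc h6)
  have hρG : ENNReal.ofReal (1-ε) < ρ G :=
    (ENNReal.add_lt_add_iff_right ENNReal.ofReal_ne_top).1 h8
  have hfinal : ENNReal.ofReal (1-ε) < ν B := by
    rw [hνB]
    exact lt_of_lt_of_le hρG (measure_mono hGB)
  exact sComplexity_le_of_mem S n ν c' hfinal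

end Transfer

lemma complexityWeakerThan_of_measurablyIsomorphic {X Y : Type*}
    [MetricSpace X] [CompactSpace X] [MetricSpace Y] [CompactSpace Y]
    [MeasurableSpace X] [BorelSpace X] [MeasurableSpace Y] [BorelSpace Y]
    (T : X → X) (hT : Continuous T) (S : Y → Y) (hS : Continuous S)
    (ρ : Measure X) [IsProbabilityMeasure ρ] (hρT : MeasurePreserving T ρ ρ)
    (ν : Measure Y) [IsProbabilityMeasure ν] (u : ℕ → ℝ)
    (hiso : MeasurablyIsomorphic T ρ S ν)
    (h : ComplexityWeakerThan T dist ρ u) : ComplexityWeakerThan S dist ν u := by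
  intro ε hε δ hδ
  set ε' := min ε (1/2) with hε'def
  have hε'pos : 0 < ε' := lt_min hε (by norm_num)
  have hε'le : ε' ≤ 1/2 := min_le_right _ _
  obtain ⟨ε₂, hε₂pos, hle⟩ := sComplexity_transfer T hT S hS ρ hρT ν hiso hε'pos hε'le
  have h2 := h ε₂ hε₂pos δ hδ
  refine h2.mono fun n hn => lt_of_le_of_lt ?_ hn
  have hanti : sComplexity S dist ν n ε ≤ sComplexity S dist ν n ε' :=
    sComplexity_anti S n ν hS hε'pos (min_le_left _ _)
  exact_mod_cast le_trans hanti (hle n)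

/-- **Proposition 2.2 of Huang–Wang–Ye**: measure complexity is an invariant of
measurable isomorphism: if `(X, 𝔅_X, T, ρ)` is measurably isomorphic to
`(Y, 𝔅_Y, S, ν)`, then the measure complexity of `(X, d, T, ρ)` is weaker than
`u(n)` iff that of `(Y, d', S, ν)` is weaker than `u(n)`. -/
theorem complexityWeakerThan_iff_of_measurablyIsomorphic
    {X Y : Type*} [MetricSpace X] [CompactSpace X] [MetricSpace Y] [CompactSpace Y]
    [MeasurableSpace X] [BorelSpace X] [MeasurableSpace Y] [BorelSpace Y]
    (T : X → X) (hT : Continuous T) (S : Y → Y) (hS : Continuous S)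
    (ρ : Measure X) (hρ : IsProbabilityMeasure ρ) (hρT : MeasurePreserving T ρ ρ)
    (ν : Measure Y) (hν : IsProbabilityMeasure ν) (hνS : MeasurePreserving S ν ν)
    (u : ℕ → ℝ) (hu_mono : Monotone u) (hu_one : ∀ n, 1 ≤ u n)
    (hu_top : Tendsto u atTop atTop)
    (hiso : MeasurablyIsomorphic T ρ S ν) :
    ComplexityWeakerThan T (fun x y => dist x y) ρ u ↔
      ComplexityWeakerThan S (fun x y => dist x y) ν u := by
  constructor
  · intro h
    exact complexityWeakerThan_of_measurablyIsomorphic T hT S hS ρ hρT ν u hiso h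
  · intro h
    have hνT : MeasurePreserving S ν ν := hνS
    exact complexityWeakerThan_of_measurablyIsomorphic S hS T hT ν hνS ρ u
      (measurablyIsomorphic_symm hiso) h
end

section
/- Let α ∈ (0,1) be irrational, B > 2, and let {a(m)}_{m∈ℤ} be complex numbers satisfying |a(m)| ≤ C|m|^{−2B} for all m ≠ 0 and some constant C. Then the series ∑_{m ∈ M₂(B)} a(m)/(e(mα) − 1) is absolutely convergent: ∑_{m ∈ M₂(B)} |a(m)|/|e(mα) − 1| < ∞. -/
/-- `e(x) = e^{2πix}`. -/
noncomputable def eFun (x : ℝ) : ℂ := Complex.exp (2 * Real.pi * Complex.I * x)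

/-- Iterates of the Gauss map, starting from `α`. -/
noncomputable def gaussIter (α : ℝ) : ℕ → ℝ
  | 0 => α
  | n + 1 => Int.fract (gaussIter α n)⁻¹

/-- The denominator `q_i` of the `i`-th convergent of the continued fraction
expansion `α = [0; a₁, a₂, …]` of `α ∈ (0,1)`:
`q₀ = 1`, `q₁ = a₁`, `q_{i+2} = a_{i+2} q_{i+1} + q_i`, where
`a_{i+1} = ⌊(gaussIter α i)⁻¹⌋`. -/
noncomputable def cfDen (α : ℝ) : ℕ → ℕ
  | 0 => 1
  | 1 => ⌊(gaussIter α 0)⁻¹⌋₊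
  | n + 2 => ⌊(gaussIter α (n + 1))⁻¹⌋₊ * cfDen α (n + 1) + cfDen α n

/-- `q_i ∈ 𝒬^♯(B)`, i.e. `i ≥ 1` and `q_{i+1} > q_i^B > 1`. -/
def InQSharp (α B : ℝ) (i : ℕ) : Prop :=
  1 ≤ i ∧ (cfDen α i : ℝ) ^ B < (cfDen α (i + 1) : ℝ) ∧ (1 : ℝ) < (cfDen α i : ℝ) ^ B

/-- The resonant set `M₁(B) = {0} ∪ ⋃_{q_i ∈ 𝒬^♯(B)} {m : q_i ≤ |m| < q_{i+1}, q_i ∣ m}`. -/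
def M1Set (α B : ℝ) : Set ℤ :=
  {0} ∪ ⋃ i ∈ {i : ℕ | InQSharp α B i},
    {m : ℤ | (cfDen α i : ℤ) ≤ |m| ∧ |m| < (cfDen α (i + 1) : ℤ) ∧ (cfDen α i : ℤ) ∣ m}

/-- The non-resonant set `M₂(B) = ℤ ∖ M₁(B)`. -/
def M2Set (α B : ℝ) : Set ℤ := (M1Set α B)ᶜ

namespace HLW


/-- numerators -/
noncomputable def cfNum (α : ℝ) : ℕ → ℤ
  | 0 => 0
  | 1 => 1
  | n + 2 => ⌊(gaussIter α (n + 1))⁻¹⌋₊ * cfNum α (n + 1) + cfNum α n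

variable {α : ℝ}

lemma gauss_mem (hα : α ∈ Set.Ioo (0:ℝ) 1) (hirr : Irrational α) (n : ℕ) :
    gaussIter α n ∈ Set.Ioo (0:ℝ) 1 ∧ Irrational (gaussIter α n) := by
  induction n with
  | zero => exact ⟨hα, hirr⟩
  | succ n ih =>
    obtain ⟨⟨h0, h1⟩, hi⟩ := ih
    have hfr : Irrational (Int.fract (gaussIter α n)⁻¹) := by
      rw [Int.fract]; exact hi.inv.sub_intCast _
    have hg : gaussIter α (n+1) = Int.fract (gaussIter α n)⁻¹ := rfl
    refine ⟨⟨?_, ?_⟩, by rw [hg]; exact hfr⟩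
    · rw [hg]
      exact lt_of_le_of_ne (Int.fract_nonneg _) (Ne.symm (by simpa using hfr.ne_int 0))
    · rw [hg]; exact Int.fract_lt_one _

lemma gauss_inv_gt_one (hα : α ∈ Set.Ioo (0:ℝ) 1) (hirr : Irrational α) (n : ℕ) :
    1 < (gaussIter α n)⁻¹ := by
  obtain ⟨⟨h0, h1⟩, -⟩ := gauss_mem hα hirr n
  exact (one_lt_inv₀ h0).mpr h1

lemma aq_pos (hα : α ∈ Set.Ioo (0:ℝ) 1) (hirr : Irrational α) (n : ℕ) :
    1 ≤ ⌊(gaussIter α n)⁻¹⌋₊ :=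
  Nat.one_le_floor_iff _ |>.mpr (gauss_inv_gt_one hα hirr n).le

/-- The key identity `1/α_n = a_{n+1} + α_{n+1}`. -/
lemma gauss_inv_eq (hα : α ∈ Set.Ioo (0:ℝ) 1) (hirr : Irrational α) (n : ℕ) :
    (gaussIter α n)⁻¹ = (⌊(gaussIter α n)⁻¹⌋₊ : ℝ) + gaussIter α (n+1) := by
  have h0 : (0:ℝ) ≤ (gaussIter α n)⁻¹ := by
    have := gauss_inv_gt_one hα hirr n; linarith
  have : gaussIter α (n+1) = Int.fract (gaussIter α n)⁻¹ := rfl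
  rw [this, Int.fract, natCast_floor_eq_intCast_floor h0]
  ring

lemma cfDen_one_le (hα : α ∈ Set.Ioo (0:ℝ) 1) (hirr : Irrational α) :
    ∀ n, 1 ≤ cfDen α n := by
  have h : ∀ n, 1 ≤ cfDen α n ∧ 1 ≤ cfDen α (n+1) := by
    intro n
    induction n with
    | zero => exact ⟨le_refl _, aq_pos hα hirr 0⟩
    | succ n ih =>
      refine ⟨ih.2, ?_⟩
      show 1 ≤ ⌊(gaussIter α (n + 1))⁻¹⌋₊ * cfDen α (n + 1) + cfDen α n
      have := ih.1; omega
  exact fun n => (h n).1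

lemma cfDen_mono (hα : α ∈ Set.Ioo (0:ℝ) 1) (hirr : Irrational α) :
    Monotone (cfDen α) := by
  apply monotone_nat_of_le_succ
  intro n
  match n with
  | 0 => exact aq_pos hα hirr 0
  | n + 1 =>
    show cfDen α (n+1) ≤ ⌊(gaussIter α (n + 1))⁻¹⌋₊ * cfDen α (n + 1) + cfDen α n
    have h1 := aq_pos hα hirr (n+1)
    have h2 := cfDen_one_le hα hirr n
    nlinarith

lemma cfDen_strict (hα : α ∈ Set.Ioo (0:ℝ) 1) (hirr : Irrational α) (n : ℕ) :
    cfDen α (n+1) < cfDen α (n+2) := by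
  show cfDen α (n+1) < ⌊(gaussIter α (n + 1))⁻¹⌋₊ * cfDen α (n + 1) + cfDen α n
  have h1 := aq_pos hα hirr (n+1)
  have h2 := cfDen_one_le hα hirr n
  have h3 := cfDen_one_le hα hirr (n+1)
  nlinarith

lemma cfDen_tendsto (hα : α ∈ Set.Ioo (0:ℝ) 1) (hirr : Irrational α) (k : ℕ) :
    k + 1 ≤ cfDen α (2*k) := by
  induction k with
  | zero => simp [cfDen]
  | succ k ih =>
    have : cfDen α (2*k+2) = ⌊(gaussIter α (2*k + 1))⁻¹⌋₊ * cfDen α (2*k + 1) + cfDen α (2*k) := rfl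
    have h1 := aq_pos hα hirr (2*k+1)
    have h3 := cfDen_one_le hα hirr (2*k+1)
    have : 2*(k+1) = 2*k+2 := by ring
    rw [this]
    show k + 2 ≤ ⌊(gaussIter α (2*k + 1))⁻¹⌋₊ * cfDen α (2*k + 1) + cfDen α (2*k)
    nlinarith




/-- `D n = q_n α - p_n`. -/
noncomputable def D (α : ℝ) (n : ℕ) : ℝ := (cfDen α n : ℝ) * α - (cfNum α n : ℝ)

/-- `P n = ∏_{k ≤ n} α_k`. -/
noncomputable def P (α : ℝ) (n : ℕ) : ℝ := ∏ k ∈ Finset.range (n+1), gaussIter α k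


lemma P_succ (n : ℕ) : P α (n+1) = P α n * gaussIter α (n+1) := Finset.prod_range_succ _ _

lemma P_pos (hα : α ∈ Set.Ioo (0:ℝ) 1) (hirr : Irrational α) (n : ℕ) : 0 < P α n :=
  Finset.prod_pos fun k _ => (gauss_mem hα hirr k).1.1

lemma P_succ_lt (hα : α ∈ Set.Ioo (0:ℝ) 1) (hirr : Irrational α) (n : ℕ) :
    P α (n+1) < P α n := by
  rw [P_succ]
  have h1 := (gauss_mem hα hirr (n+1)).1.2
  have h0 := P_pos hα hirr n
  nlinarith

lemma P_anti (hα : α ∈ Set.Ioo (0:ℝ) 1) (hirr : Irrational α) {m n : ℕ} (h : m ≤ n) :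
    P α n ≤ P α m := by
  induction n with
  | zero => simp_all
  | succ n ih =>
    rcases Nat.eq_or_lt_of_le h with rfl | h'
    · exact le_refl _
    · exact le_trans (P_succ_lt hα hirr n).le (ih (Nat.lt_succ_iff.mp h'))

/-- `q_n α - p_n = (-1)^n P n`. -/
lemma D_eq (hα : α ∈ Set.Ioo (0:ℝ) 1) (hirr : Irrational α) (n : ℕ) :
    D α n = (-1)^n * P α n := by
  have key : ∀ n, D α n = (-1)^n * P α n ∧ D α (n+1) = (-1)^(n+1) * P α (n+1) := by
    intro n
    induction n with
    | zero =>
      constructor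
      · simp [D, P, cfDen, cfNum, gaussIter]
      · have h := gauss_inv_eq hα hirr 0
        have hα0 : gaussIter α 0 = α := rfl
        have hne : α ≠ 0 := by have := hα.1; linarith
        have : α⁻¹ = (⌊α⁻¹⌋₊ : ℝ) + gaussIter α 1 := by rw [← hα0]; exact h
        simp only [D, P, cfDen, cfNum]
        have hprod : ∏ k ∈ Finset.range 2, gaussIter α k = α * gaussIter α 1 := by
          rw [Finset.prod_range_succ, Finset.prod_range_one, hα0]
        rw [hprod]
        have : (⌊α⁻¹⌋₊ : ℝ) = α⁻¹ - gaussIter α 1 := by linarith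
        rw [hα0, this]
        field_simp
        push_cast; ring
    | succ n ih =>
      obtain ⟨ih1, ih2⟩ := ih
      refine ⟨ih2, ?_⟩
      have hD : D α (n+2) = (⌊(gaussIter α (n+1))⁻¹⌋₊ : ℝ) * D α (n+1) + D α n := by
        simp only [D]
        have hq : cfDen α (n+2) = ⌊(gaussIter α (n + 1))⁻¹⌋₊ * cfDen α (n + 1) + cfDen α n := rfl
        have hp : cfNum α (n+2) = ⌊(gaussIter α (n + 1))⁻¹⌋₊ * cfNum α (n + 1) + cfNum α n := rfl
        rw [hq, hp]
        push_cast
        ring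
      have hPP : P α (n+2) = P α (n+1) * gaussIter α (n+2) := P_succ (n+1)
      have hx := gauss_inv_eq hα hirr (n+1)
      have hxne : gaussIter α (n+1) ≠ 0 := ne_of_gt (gauss_mem hα hirr (n+1)).1.1
      -- gaussIter α (n+2) = (gaussIter α (n+1))⁻¹ - a
      have hg2 : gaussIter α (n+2) = (gaussIter α (n+1))⁻¹ - (⌊(gaussIter α (n+1))⁻¹⌋₊ : ℝ) := by
        linarith
      rw [hD, ih1, ih2, hPP, hg2, P_succ]
      field_simp
      ring
  exact (key n).1

/-- determinant identity -/
lemma det_eq (n : ℕ) : cfNum α (n+1) * (cfDen α n : ℤ) - cfNum α n * (cfDen α (n+1) : ℤ) = (-1)^n := by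
  induction n with
  | zero => simp [cfNum, cfDen]
  | succ n ih =>
    have hq : (cfDen α (n+2) : ℤ) = ⌊(gaussIter α (n + 1))⁻¹⌋₊ * (cfDen α (n + 1) : ℤ) + (cfDen α n : ℤ) := by
      have : cfDen α (n+2) = ⌊(gaussIter α (n + 1))⁻¹⌋₊ * cfDen α (n + 1) + cfDen α n := rfl
      push_cast [this]; ring
    have hp : cfNum α (n+2) = (⌊(gaussIter α (n + 1))⁻¹⌋₊ : ℤ) * cfNum α (n + 1) + cfNum α n := rfl
    rw [hq, hp]
    push_cast
    linear_combination (-1 : ℤ) * ih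

/-- `q_{n+1} P n + q_n P (n+1) = 1` -/
lemma qP_identity (hα : α ∈ Set.Ioo (0:ℝ) 1) (hirr : Irrational α) (n : ℕ) :
    (cfDen α (n+1) : ℝ) * P α n + (cfDen α n : ℝ) * P α (n+1) = 1 := by
  have h1 : (cfDen α (n+1) : ℝ) * D α n - (cfDen α n : ℝ) * D α (n+1)
      = -(cfNum α n * (cfDen α (n+1):ℝ) - cfNum α (n+1) * (cfDen α n : ℝ)) := by
    simp only [D]; ring
  have h2 := det_eq (α := α) n
  have h2' : (cfNum α (n+1) : ℝ) * (cfDen α n : ℝ) - (cfNum α n : ℝ) * (cfDen α (n+1) : ℝ) = (-1)^n := by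
    exact_mod_cast congrArg (Int.cast : ℤ → ℝ) h2
  rw [D_eq hα hirr n, D_eq hα hirr (n+1)] at h1
  rcases neg_one_pow_eq_or ℝ n with hs | hs <;>
    · rw [pow_succ] at h1
      rw [hs] at h1 h2'
      nlinarith [h1, h2']



lemma P_le (hα : α ∈ Set.Ioo (0:ℝ) 1) (hirr : Irrational α) (n : ℕ) :
    (cfDen α (n+1) : ℝ) * P α n ≤ 1 := by
  have h := qP_identity hα hirr n
  have h1 : (0:ℝ) < cfDen α n := by exact_mod_cast cfDen_one_le hα hirr n
  nlinarith [P_pos hα hirr (n+1)]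

lemma P_ge (hα : α ∈ Set.Ioo (0:ℝ) 1) (hirr : Irrational α) (n : ℕ) :
    1 ≤ 2 * (cfDen α (n+1) : ℝ) * P α n := by
  have h := qP_identity hα hirr n
  have h1 : (cfDen α n : ℝ) ≤ (cfDen α (n+1) : ℝ) := by
    exact_mod_cast cfDen_mono hα hirr (Nat.le_succ n)
  have h2 : (0:ℝ) < cfDen α n := by exact_mod_cast cfDen_one_le hα hirr n
  nlinarith [P_succ_lt hα hirr n, P_pos hα hirr (n+1)]

/-- helper: if `a*b ≥ 0` then `|a| ≤ |a+b|` -/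
lemma abs_le_abs_add {a b : ℝ} (h : 0 ≤ a * b) : |a| ≤ |a + b| := by
  have h2 : a^2 ≤ (a+b)^2 := by nlinarith [sq_nonneg b]
  calc |a| = Real.sqrt (a^2) := (Real.sqrt_sq_eq_abs a).symm
    _ ≤ Real.sqrt ((a+b)^2) := Real.sqrt_le_sqrt h2
    _ = |a + b| := Real.sqrt_sq_eq_abs _

/-- **Best approximation**: if `0 < q < q_{n+1}` then `|qα - p| ≥ P n`. -/
lemma bestApprox (hα : α ∈ Set.Ioo (0:ℝ) 1) (hirr : Irrational α) (n : ℕ) (p q : ℤ)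
    (hq : 0 < q) (hq' : q < (cfDen α (n+1) : ℤ)) :
    P α n ≤ |(q:ℝ) * α - p| := by
  set x : ℤ := (-1)^n * (cfNum α (n+1) * q - (cfDen α (n+1) : ℤ) * p) with hx
  set y : ℤ := (-1)^n * ((cfDen α n : ℤ) * p - cfNum α n * q) with hy
  have hdet := det_eq (α := α) n
  have hqeq : q = x * (cfDen α n : ℤ) + y * (cfDen α (n+1) : ℤ) := by
    rw [hx, hy]
    have hsq : ((-1:ℤ))^n * ((-1:ℤ))^n = 1 := by
      rw [← pow_add]; exact (neg_one_pow_eq_one_iff_even (by norm_num)).2 ⟨n, by ring⟩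
    linear_combination (-((-1:ℤ)^n) * q) * hdet + (-q) * hsq
  have hpeq : p = x * cfNum α n + y * cfNum α (n+1) := by
    rw [hx, hy]
    have hsq : ((-1:ℤ))^n * ((-1:ℤ))^n = 1 := by
      rw [← pow_add]; exact (neg_one_pow_eq_one_iff_even (by norm_num)).2 ⟨n, by ring⟩
    linear_combination (-((-1:ℤ)^n) * p) * hdet + (-p) * hsq
  have hkey : (q:ℝ) * α - p = (x:ℝ) * D α n + (y:ℝ) * D α (n+1) := by
    simp only [D]
    have h1 : ((q:ℤ):ℝ) = (x:ℝ) * (cfDen α n : ℝ) + (y:ℝ) * (cfDen α (n+1) : ℝ) := by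
      exact_mod_cast congrArg (Int.cast : ℤ → ℝ) hqeq
    have h2 : ((p:ℤ):ℝ) = (x:ℝ) * (cfNum α n : ℝ) + (y:ℝ) * (cfNum α (n+1) : ℝ) := by
      exact_mod_cast congrArg (Int.cast : ℤ → ℝ) hpeq
    rw [h1, h2]; ring
  have hq1 : (1:ℤ) ≤ (cfDen α n : ℤ) := by exact_mod_cast cfDen_one_le hα hirr n
  have hq2 : (1:ℤ) ≤ (cfDen α (n+1) : ℤ) := by exact_mod_cast cfDen_one_le hα hirr (n+1)
  by_cases hy0 : y = 0
  · -- q = x * q_n, so x ≠ 0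
    have hx0 : x ≠ 0 := by
      intro h0
      rw [h0, hy0] at hqeq
      simp at hqeq
      omega
    have hx1 : (1:ℝ) ≤ |(x:ℝ)| := by
      rw [← Int.cast_abs]
      exact_mod_cast Int.one_le_abs hx0
    rw [hkey, hy0]
    push_cast
    rw [D_eq hα hirr n, zero_mul, add_zero, abs_mul, abs_mul, abs_pow, abs_neg, abs_one,
      one_pow, one_mul, abs_of_pos (P_pos hα hirr n)]
    nlinarith [P_pos hα hirr n]
  · by_cases hx0 : x = 0
    · exfalso
      rw [hx0] at hqeq
      simp only [zero_mul, zero_add] at hqeq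
      have : (1:ℤ) ≤ |y| := Int.one_le_abs hy0
      have : (cfDen α (n+1) : ℤ) ≤ |q| := by
        rw [hqeq, abs_mul]
        calc (cfDen α (n+1) : ℤ) = 1 * (cfDen α (n+1) : ℤ) := (one_mul _).symm
          _ ≤ |y| * |(cfDen α (n+1) : ℤ)| := by
              rw [abs_of_nonneg (by omega : (0:ℤ) ≤ (cfDen α (n+1) : ℤ))]
              exact mul_le_mul_of_nonneg_right this (by omega)
      rw [abs_of_pos hq] at this
      omega
    · -- both nonzero: x*y ≤ 0
      have hxy : x * y < 0 := by
        rcases lt_trichotomy (x*y) 0 with h | h | h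
        · exact h
        · exfalso; rcases mul_eq_zero.mp h with h' | h' <;> [exact hx0 h'; exact hy0 h']
        · exfalso
          -- same sign: |q| ≥ q_n + q_{n+1}
          rcases (mul_pos_iff.mp h) with ⟨hx', hy'⟩ | ⟨hx', hy'⟩
          · have : (cfDen α n : ℤ) + (cfDen α (n+1) : ℤ) ≤ q := by
              rw [hqeq]; nlinarith
            omega
          · have : q ≤ -((cfDen α n : ℤ) + (cfDen α (n+1) : ℤ)) := by
              rw [hqeq]; nlinarith
            omega
      -- (x D_n) * (y D_{n+1}) ≥ 0
      have hDn := D_eq hα hirr n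
      have hDn1 := D_eq hα hirr (n+1)
      have hprod : 0 ≤ ((x:ℝ) * D α n) * ((y:ℝ) * D α (n+1)) := by
        have hxyR : (x:ℝ) * y < 0 := by exact_mod_cast hxy
        have hsq : ((-1:ℝ)^n) * ((-1:ℝ)^n) = 1 := by
          rw [← pow_add]
          exact (neg_one_pow_eq_one_iff_even (by norm_num)).2 ⟨n, by ring⟩
        have heq : ((x:ℝ) * D α n) * ((y:ℝ) * D α (n+1))
            = -((x:ℝ)*(y:ℝ)) * (P α n * P α (n+1)) := by
          rw [hDn, hDn1, pow_succ]
          linear_combination (-(x:ℝ)*(y:ℝ)*(P α n)*(P α (n+1))) * hsq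
        rw [heq]
        nlinarith [mul_pos (P_pos hα hirr n) (P_pos hα hirr (n+1)), hxyR]
      rw [hkey]
      calc P α n ≤ |(x:ℝ)| * P α n := by
            have hx1 : (1:ℝ) ≤ |(x:ℝ)| := by
              rw [← Int.cast_abs]; exact_mod_cast Int.one_le_abs hx0
            nlinarith [P_pos hα hirr n]
        _ = |(x:ℝ) * D α n| := by
            rw [abs_mul, hDn, abs_mul, abs_pow, abs_neg, abs_one, one_pow, one_mul,
              abs_of_pos (P_pos hα hirr n)]
        _ ≤ |(x:ℝ) * D α n + (y:ℝ) * D α (n+1)| := abs_le_abs_add hprod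



lemma abs_sub_le_add (a b : ℤ) : |a - b| ≤ |a| + |b| := by
  calc |a - b| = |a + (-b)| := by ring_nf
    _ ≤ |a| + |(-b)| := abs_add_le _ _
    _ = |a| + |b| := by rw [abs_neg]

lemma abs_le_abs_add_abs (A C : ℝ) : |C| ≤ |A + C| + |A| := by
  calc |C| = |(A + C) + (-A)| := by ring_nf
    _ ≤ |A + C| + |(-A)| := abs_add_le _ _
    _ = |A + C| + |A| := by rw [abs_neg]

lemma bestApprox' (hα : α ∈ Set.Ioo (0:ℝ) 1) (hirr : Irrational α) (n : ℕ) (m u : ℤ)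
    (hm : m ≠ 0) (h : |m| < (cfDen α (n+1) : ℤ)) :
    P α n ≤ |(m:ℝ) * α - u| := by
  rcases lt_or_gt_of_ne hm with hneg | hpos
  · have h' : -m < (cfDen α (n+1) : ℤ) := by rw [abs_of_neg hneg] at h; exact h
    have := bestApprox hα hirr n (-u) (-m) (by omega) h'
    have heq : |((-m : ℤ):ℝ) * α - ((-u : ℤ):ℝ)| = |(m:ℝ) * α - u| := by
      push_cast
      rw [show -(m:ℝ) * α - -(u:ℝ) = -((m:ℝ) * α - u) by ring, abs_neg]
    rwa [heq] at this
  · exact bestApprox hα hirr n u m hpos (by rwa [abs_of_pos hpos] at h)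

lemma exists_index (hα : α ∈ Set.Ioo (0:ℝ) 1) (hirr : Irrational α) (M : ℕ) (hM : 1 ≤ M) :
    ∃ i, cfDen α i ≤ M ∧ M < cfDen α (i+1) := by
  classical
  set Pr : ℕ → Prop := fun i => cfDen α i ≤ M with hPr
  have hP0 : Pr 0 := by simp [hPr, cfDen, hM]
  set i := Nat.findGreatest Pr (2*M) with hi
  have hspec : Pr i := Nat.findGreatest_spec (Nat.zero_le _) hP0
  have hb : ¬ Pr (2*M) := by
    have := cfDen_tendsto hα hirr M
    simp only [hPr]; omega
  have hib : i ≤ 2*M := Nat.findGreatest_le _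
  have hne : i ≠ 2*M := fun h => hb (h ▸ hspec)
  have hnext : ¬ Pr (i+1) := Nat.findGreatest_is_greatest (Nat.lt_succ_self i) (by omega)
  exact ⟨i, hspec, by simpa [hPr] using Nat.lt_of_not_le (by simpa [hPr] using hnext)⟩

set_option maxHeartbeats 1000000 in
/-- The key lower bound: for `m ∈ M₂(B)` and any integer `u`,
`|mα - u| ≥ c |m|^{-B}` with `c = min (P α 1) (16)⁻¹`. -/
lemma key_lower (hα : α ∈ Set.Ioo (0:ℝ) 1) (hirr : Irrational α) {B : ℝ} (hB : 2 < B)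
    (m : ℤ) (hm : m ∈ M2Set α B) (u : ℤ) :
    min (P α 1) (16:ℝ)⁻¹ * ((|m| : ℤ) : ℝ) ^ (-B) ≤ |(m:ℝ) * α - u| := by
  have hm0 : m ≠ 0 := by
    intro h
    exact hm (Set.mem_union_left _ (by simp [h]))
  set c : ℝ := min (P α 1) (16:ℝ)⁻¹ with hc
  have hP1 := P_pos hα hirr 1
  have hc0 : 0 < c := by positivity
  have hc1 : c ≤ P α 1 := min_le_left _ _
  have hc2 : c ≤ (16:ℝ)⁻¹ := min_le_right _ _
  set M : ℕ := m.natAbs with hMdef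
  have hM1 : 1 ≤ M := by omega
  have habs : (|m| : ℤ) = (M : ℤ) := Int.abs_eq_natAbs m
  have hmR : (1:ℝ) ≤ (M:ℝ) := by exact_mod_cast hM1
  have hM0 : (0:ℝ) < (M:ℝ) := by linarith
  rw [habs]
  set R : ℝ := ((M:ℤ):ℝ) ^ (-B) with hR
  have hRM : R = ((M:ℝ))^(-B) := by rw [hR, Int.cast_natCast]
  have hR0 : 0 < R := by
    rw [hRM]; exact Real.rpow_pos_of_pos hM0 _
  have hR1 : R ≤ 1 := by
    rw [hRM]; exact Real.rpow_le_one_of_one_le_of_nonpos hmR (by linarith)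
  have hRinv : R ≤ ((M:ℝ))⁻¹ := by
    rw [hRM, ← Real.rpow_neg_one]
    exact Real.rpow_le_rpow_of_exponent_le hmR (by linarith)
  obtain ⟨i, hiq, hiq'⟩ := exists_index hα hirr M hM1
  have hqpos : (0:ℝ) < (cfDen α i : ℝ) := by
    have := cfDen_one_le hα hirr i
    positivity
  have hq1pos : (0:ℝ) < (cfDen α (i+1) : ℝ) := by
    have := cfDen_one_le hα hirr (i+1); positivity
  have hiq'' : |m| < (cfDen α (i+1) : ℤ) := by rw [habs]; exact_mod_cast hiq'
  by_cases hsmall : i ≤ 1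
  · -- |m| < q_2, use best approximation at level 1
    have h2 : cfDen α (i+1) ≤ cfDen α (1+1) := cfDen_mono hα hirr (by omega)
    have hba := bestApprox' hα hirr 1 m u hm0
      (by rw [habs]; exact_mod_cast lt_of_lt_of_le hiq' h2)
    calc c * R ≤ P α 1 * 1 := by nlinarith
      _ = P α 1 := mul_one _
      _ ≤ |(m:ℝ) * α - u| := hba
  · push_neg at hsmall
    have hi2 : 2 ≤ i := hsmall
    have hq2 : 2 ≤ cfDen α i := by
      have h22 : 2 ≤ cfDen α 2 := by
        have ha1 := aq_pos hα hirr 1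
        have hb1 := cfDen_one_le hα hirr 1
        show 2 ≤ ⌊(gaussIter α 1)⁻¹⌋₊ * cfDen α 1 + cfDen α 0
        have e0 : cfDen α 0 = 1 := rfl
        nlinarith
      exact le_trans h22 (cfDen_mono hα hirr hi2)
    have hQM : (cfDen α i : ℝ) ≤ (M:ℝ) := by exact_mod_cast hiq
    have hQgt1 : (1:ℝ) < (cfDen α i : ℝ) := by exact_mod_cast hq2
    have hQB1 : (1:ℝ) < (cfDen α i : ℝ) ^ B :=
      Real.one_lt_rpow_iff_of_pos hqpos |>.mpr (Or.inl ⟨hQgt1, by linarith⟩)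
    have hQBpos : (0:ℝ) < (cfDen α i : ℝ) ^ B := by linarith
    have hMBpos : (0:ℝ) < (M:ℝ) ^ B := Real.rpow_pos_of_pos hM0 _
    by_cases hsharp : InQSharp α B i
    · -- resonant scale: q_i ∤ m since m ∈ M₂
      have hnd : ¬ ((cfDen α i : ℤ) ∣ m) := by
        intro hd
        apply hm
        refine Set.mem_union_right _ ?_
        refine Set.mem_biUnion hsharp ?_
        exact ⟨by rw [habs]; exact_mod_cast hiq, hiq'', hd⟩
      by_cases hbig : (cfDen α (i+1) : ℝ) < 8 * M
      · -- q_{i+1} < 8M : use |mα - u| ≥ P_i ≥ 1/(2 q_{i+1}) > 1/(16 M)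
        have hba := bestApprox' hα hirr i m u hm0 hiq''
        have hPge := P_ge hα hirr i
        have hPi : (1:ℝ)/(16*M) ≤ P α i := by
          have h16 : (0:ℝ) < 16 * M := by linarith
          rw [div_le_iff₀ h16]
          nlinarith [P_pos hα hirr i]
        calc c * R ≤ (16:ℝ)⁻¹ * (M:ℝ)⁻¹ :=
              mul_le_mul hc2 hRinv (le_of_lt hR0) (by norm_num)
          _ = 1/(16*M) := by rw [one_div, mul_inv]
          _ ≤ P α i := hPi
          _ ≤ |(m:ℝ) * α - u| := hba
      · -- 8M ≤ q_{i+1} : three-distance style argument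
        push_neg at hbig
        obtain ⟨j, rfl⟩ : ∃ j, i = j + 1 := ⟨i - 1, by omega⟩
        have hqipos : (0:ℤ) < (cfDen α (j+1) : ℤ) := by
          have := cfDen_one_le hα hirr (j+1); exact_mod_cast this
        set r : ℤ := m % (cfDen α (j+1) : ℤ) with hrdef
        set t : ℤ := m / (cfDen α (j+1) : ℤ) with htdef
        have hr0 : 0 ≤ r := Int.emod_nonneg m (by omega)
        have hr1 : r < (cfDen α (j+1) : ℤ) := Int.emod_lt_of_pos m hqipos
        have hrne : r ≠ 0 := fun h => hnd (Int.dvd_of_emod_eq_zero h)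
        have hmeq : m = (cfDen α (j+1) : ℤ) * t + r := (Int.mul_ediv_add_emod m _).symm
        -- best approximation at level j for r
        have hbar := bestApprox hα hirr j (u - t * cfNum α (j+1)) r (by omega) hr1
        -- |t| bound
        have hqiM : (cfDen α (j+1) : ℤ) ≤ (M : ℤ) := by exact_mod_cast hiq
        have htb : |t| * (cfDen α (j+1) : ℤ) ≤ 2 * (M:ℤ) := by
          have h1 : |t| * (cfDen α (j+1) : ℤ) = |m - r| := by
            rw [show m - r = (cfDen α (j+1) : ℤ) * t by omega, abs_mul,
              abs_of_pos hqipos]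
            ring
          have h2 := abs_sub_le_add m r
          have h3 : |r| = r := abs_of_nonneg hr0
          have h4 : |m| = (M:ℤ) := habs
          omega
        -- decomposition
        have hkey : (m:ℝ) * α - u
            = (t:ℝ) * D α (j+1) + ((r:ℝ) * α - ((u - t * cfNum α (j+1) : ℤ) : ℝ)) := by
          have hcast : ((m:ℤ):ℝ) = ((cfDen α (j+1) : ℕ):ℝ) * (t:ℝ) + (r:ℝ) := by
            exact_mod_cast congrArg (Int.cast : ℤ → ℝ) hmeq
          simp only [D]
          push_cast
          push_cast at hcast
          linear_combination α * hcast
        have hDabs : |(t:ℝ) * D α (j+1)| = |(t:ℝ)| * P α (j+1) := by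
          rw [abs_mul, D_eq hα hirr (j+1), abs_mul, abs_pow, abs_neg, abs_one, one_pow,
            one_mul, abs_of_pos (P_pos hα hirr (j+1))]
        have hlow : P α j - |(t:ℝ)| * P α (j+1) ≤ |(m:ℝ) * α - u| := by
          have h5 := abs_le_abs_add_abs ((t:ℝ) * D α (j+1))
            ((r:ℝ) * α - ((u - t * cfNum α (j+1) : ℤ) : ℝ))
          rw [← hkey, hDabs] at h5
          linarith [hbar]
        -- numeric bounds
        have hq2pos : (0:ℝ) < (cfDen α (j+1+1) : ℝ) := by
          have := cfDen_one_le hα hirr (j+1+1); positivity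
        have hPj1pos := P_pos hα hirr (j+1)
        have hPjpos := P_pos hα hirr j
        have hqiR : (1:ℝ) ≤ (cfDen α (j+1) : ℝ) := by exact_mod_cast cfDen_one_le hα hirr (j+1)
        have hqiRM : (cfDen α (j+1) : ℝ) ≤ (M:ℝ) := by exact_mod_cast hiq
        have hTR : |(t:ℝ)| * (cfDen α (j+1) : ℝ) ≤ 2 * (M:ℝ) := by
          have h' : ((|t| * (cfDen α (j+1) : ℤ) : ℤ) : ℝ) ≤ ((2 * (M:ℤ) : ℤ) : ℝ) := by
            exact_mod_cast htb
          push_cast at h'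
          exact h'
        have hPle := P_le hα hirr (j+1)   -- q_{j+2} P_{j+1} ≤ 1
        have hPge := P_ge hα hirr j       -- 1 ≤ 2 q_{j+1} P_j
        have hT0 : (0:ℝ) ≤ |(t:ℝ)| := abs_nonneg _
        -- 8M * P_{j+1} ≤ 1
        have e1 : 8*(M:ℝ)*P α (j+1) ≤ 1 := by
          nlinarith [mul_nonneg (sub_nonneg.mpr hbig) hPj1pos.le, hPle]
        -- 4 q_{j+1} * (|t| * P_{j+1}) ≤ 1
        have e2 : 4*(cfDen α (j+1) : ℝ)*(|(t:ℝ)| * P α (j+1)) ≤ 1 := by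
          nlinarith [mul_le_mul_of_nonneg_right hTR hPj1pos.le, e1]
        have e4 : c * R ≤ 1/(4*(M:ℝ)) := by
          have : c * R ≤ (16:ℝ)⁻¹ * (M:ℝ)⁻¹ :=
            mul_le_mul hc2 hRinv (le_of_lt hR0) (by norm_num)
          have h16 : (16:ℝ)⁻¹ * (M:ℝ)⁻¹ ≤ 1/(4*(M:ℝ)) := by
            rw [one_div, mul_inv]
            apply mul_le_mul _ (le_refl _) (by positivity) (by norm_num)
            norm_num
          linarith
        have e5 : 1/(4*(M:ℝ)) ≤ 1/(4*(cfDen α (j+1) : ℝ)) := by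
          apply one_div_le_one_div_of_le (by linarith)
          linarith
        have e6 : 1/(4*(cfDen α (j+1) : ℝ)) ≤ P α j - |(t:ℝ)| * P α (j+1) := by
          rw [div_le_iff₀ (by linarith)]
          nlinarith [hPge, e2]
        linarith
    · -- non-resonant scale: q_{i+1} ≤ q_i^B
      have hle : (cfDen α (i+1):ℝ) ≤ (cfDen α i:ℝ)^B :=
        le_of_not_gt (fun h => hsharp ⟨by omega, h, hQB1⟩)
      have hba := bestApprox' hα hirr i m u hm0 hiq''
      have hPge := P_ge hα hirr i
      have hQBM : (cfDen α i : ℝ)^B ≤ (M:ℝ)^B :=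
        Real.rpow_le_rpow (le_of_lt hqpos) hQM (by linarith)
      have hRMB : R = ((M:ℝ)^B)⁻¹ := by rw [hRM, Real.rpow_neg (le_of_lt hM0)]
      have step : c * R ≤ 1/(2*(M:ℝ)^B) := by
        rw [hRMB]
        have : c * ((M:ℝ)^B)⁻¹ ≤ (16:ℝ)⁻¹ * ((M:ℝ)^B)⁻¹ :=
          mul_le_mul_of_nonneg_right hc2 (by positivity)
        have h2 : (16:ℝ)⁻¹ * ((M:ℝ)^B)⁻¹ ≤ 1/(2*(M:ℝ)^B) := by
          rw [one_div, mul_inv]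
          apply mul_le_mul _ (le_refl _) (by positivity) (by norm_num)
          norm_num
        linarith
      have step2 : 1/(2*(M:ℝ)^B) ≤ 1/(2*(cfDen α (i+1):ℝ)) := by
        apply one_div_le_one_div_of_le (by linarith)
        linarith
      have step3 : 1/(2*(cfDen α (i+1):ℝ)) ≤ P α i := by
        rw [div_le_iff₀ (by linarith)]
        nlinarith [P_pos hα hirr i]
      linarith



open Real

/-- `|e(x) - 1| ≥ 4 |x - u|` whenever `|x - u| ≤ 1/2`. -/
lemma eFun_lower (x : ℝ) (u : ℤ) (h : |x - u| ≤ 1/2) :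
    4 * |x - (u:ℝ)| ≤ ‖eFun x - 1‖ := by
  set y : ℝ := x - u with hy
  have h1 : eFun x = Complex.exp ((2*π*y : ℝ) * Complex.I) := by
    unfold eFun
    have he : (2 * (π:ℂ) * Complex.I * (x:ℂ))
        = ((2*π*y : ℝ) : ℂ) * Complex.I + (u:ℤ) * (2 * (π:ℂ) * Complex.I) := by
      push_cast [hy]
      ring
    rw [he, Complex.exp_add, Complex.exp_int_mul_two_pi_mul_I, mul_one]
  have h2 : eFun x - 1
      = ((Real.cos (2*π*y) - 1 : ℝ) : ℂ) + ((Real.sin (2*π*y) : ℝ) : ℂ) * Complex.I := by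
    rw [h1, Complex.exp_mul_I]
    push_cast
    ring
  have h3 : ‖eFun x - 1‖
      = Real.sqrt ((Real.cos (2*π*y) - 1)^2 + (Real.sin (2*π*y))^2) := by
    rw [h2, Complex.norm_def, Complex.normSq_add_mul_I]
  have h4 : (Real.cos (2*π*y) - 1)^2 + (Real.sin (2*π*y))^2 = (2 * Real.sin (π*y))^2 := by
    have hs : Real.sin (π*y)^2 = 1/2 - Real.cos (2*π*y)/2 := by
      rw [Real.sin_sq_eq_half_sub]
      ring_nf
    nlinarith [Real.sin_sq_add_cos_sq (2*π*y)]
  have h5 : ‖eFun x - 1‖ = 2 * |Real.sin (π*y)| := by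
    rw [h3, h4, Real.sqrt_sq_eq_abs, abs_mul]
    norm_num
  have h6 : 2 * |y| ≤ |Real.sin (π*y)| := by
    have hpi := Real.pi_pos
    have hb : |π*y| ≤ π/2 := by
      rw [abs_mul, abs_of_pos hpi]
      calc π * |y| ≤ π * (1/2) := by
            apply mul_le_mul_of_nonneg_left _ hpi.le
            rwa [hy]
        _ = π/2 := by ring
    have := Real.mul_abs_le_abs_sin hb
    have heq : 2 / π * |π*y| = 2 * |y| := by
      rw [abs_mul, abs_of_pos hpi]
      field_simp
    linarith [heq ▸ this]
  rw [h5, hy]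
  linarith


end HLW

/-- **Lemma 4.2 of Huang–Liu–Wang**: for irrational `α ∈ (0,1)`, `B > 2` and a
sequence `a(m)` with `|a(m)| ≤ C|m|^{−2B}`, the series
`∑_{m ∈ M₂(B)} a(m)/(e(mα) − 1)` is absolutely convergent. -/
theorem summable_nonresonant_series
    (α : ℝ) (hα : α ∈ Set.Ioo (0 : ℝ) 1) (hαirr : Irrational α)
    (B : ℝ) (hB : 2 < B) (a : ℤ → ℂ) (C : ℝ)
    (ha : ∀ m : ℤ, m ≠ 0 → ‖a m‖ ≤ C * (|m| : ℝ) ^ (-(2 * B))) :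
    Summable (fun m : M2Set α B =>
      ‖a (m : ℤ)‖ / ‖eFun (((m : ℤ) : ℝ) * α) - 1‖) := by
  set c : ℝ := min (HLW.P α 1) (16:ℝ)⁻¹ with hc
  have hP1 := HLW.P_pos hα hαirr 1
  have hc0 : 0 < c := by positivity
  have hC : 0 ≤ C := by
    have h1 := ha 1 one_ne_zero
    simp only [Int.cast_one, abs_one, Real.one_rpow, mul_one] at h1
    exact le_trans (norm_nonneg _) h1
  -- pointwise bound
  have key : ∀ m : M2Set α B,
      ‖a (m : ℤ)‖ / ‖eFun (((m : ℤ) : ℝ) * α) - 1‖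
      ≤ (C/(4*c)) * ((|(m : ℤ)| : ℤ) : ℝ) ^ (-B) := by
    rintro ⟨m, hm⟩
    simp only
    have hm0 : m ≠ 0 := by
      intro h
      exact hm (Set.mem_union_left _ (by simp [h]))
    set R : ℝ := ((|m| : ℤ) : ℝ) ^ (-B) with hR
    have hmabs : (0:ℝ) < ((|m| : ℤ) : ℝ) := by
      have h1m : 1 ≤ |m| := Int.one_le_abs hm0
      exact_mod_cast lt_of_lt_of_le zero_lt_one h1m
    have hR0 : 0 < R := Real.rpow_pos_of_pos hmabs _
    -- lower bound for the denominator
    set u : ℤ := round ((m:ℝ) * α) with hu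
    have hru : |(m:ℝ)*α - u| ≤ 1/2 := by
      simpa [hu] using abs_sub_round ((m:ℝ)*α)
    have h1 : c * R ≤ |(m:ℝ)*α - u| := HLW.key_lower hα hαirr hB m hm u
    have h2 : 4 * |(m:ℝ)*α - u| ≤ ‖eFun ((m:ℝ)*α) - 1‖ :=
      HLW.eFun_lower ((m:ℝ)*α) u hru
    have hE : 4 * (c * R) ≤ ‖eFun ((m:ℝ)*α) - 1‖ := by linarith
    have hE0 : 0 < ‖eFun ((m:ℝ)*α) - 1‖ :=
      lt_of_lt_of_le (by positivity) hE
    -- numerator bound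
    have hnum : ‖a m‖ ≤ C * R * R := by
      have := ha m hm0
      have hcast : ((|m| : ℤ) : ℝ) = |(m:ℝ)| := by push_cast; ring
      have hmabs' : (0:ℝ) < |(m:ℝ)| := hcast ▸ hmabs
      have hsplit : |(m:ℝ)| ^ (-(2 * B)) = R * R := by
        rw [hR, hcast, show (-(2*B)) = (-B) + (-B) by ring, Real.rpow_add hmabs']
      rw [hsplit] at this
      linarith [this]
    calc ‖a m‖ / ‖eFun ((m:ℝ)*α) - 1‖
        ≤ ‖a m‖ / (4 * (c * R)) := by
          apply div_le_div_of_nonneg_left (norm_nonneg _) (by positivity) hE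
      _ ≤ (C * R * R) / (4 * (c * R)) := by
          apply div_le_div_of_nonneg_right hnum (by positivity)
      _ = (C/(4*c)) * R := by
          field_simp
  -- summability of the majorant
  have hmaj : Summable (fun m : M2Set α B => (C/(4*c)) * ((|(m : ℤ)| : ℤ) : ℝ) ^ (-B)) := by
    apply Summable.mul_left
    have hg : Summable (fun k : ℤ => ((|k| : ℤ) : ℝ) ^ (-B)) := by
      apply Summable.of_nat_of_neg
      · apply Summable.congr (Real.summable_nat_rpow.mpr (by linarith : -B < -1))
        intro n
        norm_num
      · apply Summable.congr (Real.summable_nat_rpow.mpr (by linarith : -B < -1))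
        intro n
        rw [abs_neg]
        norm_num
    exact hg.subtype _
  exact Summable.of_nonneg_of_le
    (fun m => div_nonneg (norm_nonneg _) (norm_nonneg _)) key hmaj
end

section
/- For every integer m ≥ 1 and every integer j with 0 ≤ j ≤ m−1, the functions ψ_{mj} and ψ*_{mj} on the Heisenberg group G are invariant under left multiplication by Γ: ψ_{mj}(γg) = ψ_{mj}(g) and ψ*_{mj}(γg) = ψ*_{mj}(g) for all γ ∈ Γ and g ∈ G. In particular, they induce well-defined functions on the nilmanifold Γ\G. -/
set_option linter.unreachableTactic false
set_option linter.unusedTactic false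

/-- The 3-dimensional Heisenberg group: an element represents the upper
unitriangular matrix with rows `(1, y, z), (0, 1, x), (0, 0, 1)`. -/
@[ext]
structure Heisenberg : Type where
  x : ℝ
  y : ℝ
  z : ℝ

namespace Heisenberg

instance : Mul Heisenberg :=
  ⟨fun a b => ⟨a.x + b.x, a.y + b.y, a.z + b.z + a.y * b.x⟩⟩

instance : One Heisenberg := ⟨⟨0, 0, 0⟩⟩

instance : Inv Heisenberg := ⟨fun a => ⟨-a.x, -a.y, -a.z + a.y * a.x⟩⟩

@[simp] theorem mul_x (a b : Heisenberg) : (a * b).x = a.x + b.x := rfl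
@[simp] theorem mul_y (a b : Heisenberg) : (a * b).y = a.y + b.y := rfl
@[simp] theorem mul_z (a b : Heisenberg) : (a * b).z = a.z + b.z + a.y * b.x := rfl
@[simp] theorem one_x : (1 : Heisenberg).x = 0 := rfl
@[simp] theorem one_y : (1 : Heisenberg).y = 0 := rfl
@[simp] theorem one_z : (1 : Heisenberg).z = 0 := rfl
@[simp] theorem inv_x (a : Heisenberg) : a⁻¹.x = -a.x := rfl
@[simp] theorem inv_y (a : Heisenberg) : a⁻¹.y = -a.y := rfl
@[simp] theorem inv_z (a : Heisenberg) : a⁻¹.z = -a.z + a.y * a.x := rfl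

instance : Group Heisenberg where
  mul_assoc a b c := by ext <;> simp <;> ring
  one_mul a := by ext <;> simp
  mul_one a := by ext <;> simp
  inv_mul_cancel a := by ext <;> simp <;> ring

/-- The topology on the Heisenberg group, induced from `ℝ³`. -/
instance : TopologicalSpace Heisenberg :=
  TopologicalSpace.induced (fun g => (g.x, g.y, g.z)) inferInstance

end Heisenberg

/-- The lattice `Γ ≤ G` of upper unitriangular matrices with integer entries. -/
def HeisenbergGamma : Subgroup Heisenberg where
  carrier := {g | (∃ a : ℤ, g.x = a) ∧ (∃ b : ℤ, g.y = b) ∧ (∃ c : ℤ, g.z = c)}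
  mul_mem' := by
    rintro a b ⟨⟨a1, ha1⟩, ⟨a2, ha2⟩, ⟨a3, ha3⟩⟩ ⟨⟨b1, hb1⟩, ⟨b2, hb2⟩, ⟨b3, hb3⟩⟩
    refine ⟨⟨a1 + b1, ?_⟩, ⟨a2 + b2, ?_⟩, ⟨a3 + b3 + a2 * b1, ?_⟩⟩ <;>
      simp [ha1, ha2, ha3, hb1, hb2, hb3] <;> push_cast <;> ring
  one_mem' := ⟨⟨0, by simp⟩, ⟨0, by simp⟩, ⟨0, by simp⟩⟩
  inv_mem' := by
    rintro a ⟨⟨a1, ha1⟩, ⟨a2, ha2⟩, ⟨a3, ha3⟩⟩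
    refine ⟨⟨-a1, ?_⟩, ⟨-a2, ?_⟩, ⟨-a3 + a2 * a1, ?_⟩⟩ <;>
      simp [ha1, ha2, ha3] <;> push_cast <;> ring

/-- The Heisenberg nilmanifold `Γ\G`, the space of left cosets `Γg`. -/
def Nilmanifold : Type := Quotient (QuotientGroup.rightRel HeisenbergGamma)

instance : TopologicalSpace Nilmanifold :=
  inferInstanceAs (TopologicalSpace (Quotient _))

/-- The coset `Γg` as a point of the nilmanifold. -/
def Nilmanifold.mk (g : Heisenberg) : Nilmanifold :=
  Quotient.mk (QuotientGroup.rightRel HeisenbergGamma) g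

/-- The function `ψ_{mj}` on the Heisenberg group. -/
noncomputable def psiMJ (m j : ℕ) (g : Heisenberg) : ℂ :=
  eFun (m * g.z + j * g.x) *
    ∑' b : ℤ, (Real.exp (-Real.pi * (g.y + b + (j : ℝ) / m) ^ 2) : ℂ) *
      eFun (m * b * g.x)

/-- The function `ψ*_{mj}` on the Heisenberg group. -/
noncomputable def psiStarMJ (m j : ℕ) (g : Heisenberg) : ℂ :=
  Complex.I * eFun (m * g.z + j * g.x) *
    ∑' b : ℤ, (Real.exp (-Real.pi * (g.y + b + (j : ℝ) / m + 1 / 2) ^ 2) : ℂ) *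
      eFun ((1 / 2) * (g.y + b + (j : ℝ) / m) + m * b * g.x)

/-- The class `𝒜` of continuous functions on `𝕋 × Γ\G` of the form
`f(t, Γg) = e(ξ₁t + ξ₂x + ξ₃y)·ψ(Γg)` with `ψ` one of `ψ_{mj}`, `ψ̄_{mj}`,
`ψ*_{mj}`, `ψ̄*_{mj}`. -/
def InClassA (f : UnitAddCircle × Nilmanifold → ℂ) : Prop :=
  Continuous f ∧
  ∃ (ξ₁ ξ₂ ξ₃ : ℤ) (m j : ℕ), 1 ≤ m ∧ j < m ∧
    ∃ ψf : Heisenberg → ℂ,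
      (ψf = psiMJ m j ∨ ψf = (fun g => starRingEnd ℂ (psiMJ m j g)) ∨
        ψf = psiStarMJ m j ∨ ψf = (fun g => starRingEnd ℂ (psiStarMJ m j g))) ∧
      ∀ t x y z : ℝ,
        f ((t : UnitAddCircle), Nilmanifold.mk ⟨x, y, z⟩)
          = eFun (ξ₁ * t + ξ₂ * x + ξ₃ * y) * ψf ⟨x, y, z⟩

/-!
Both functions have the shape `e(mz + jx) · Z(x, y)`, where `Z` is the Zak transform of a
function on `ℝ`. Left multiplication by `(a, b, c) ∈ Γ` sends `(x, y, z)` to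
`(x + a, y + b, z + c + bx)`. The Zak transform is quasi-periodic,
`Z(x + a, y + b) = e(-mbx) Z(x, y)`, and this factor cancels the change `e(mbx)` of the
prefactor, up to integers in the exponent.
-/

lemma eFun_add (a b : ℝ) : eFun (a + b) = eFun a * eFun b := by
  rw [eFun, eFun, eFun, ← Complex.exp_add]
  push_cast
  ring_nf

lemma eFun_intCast (n : ℤ) : eFun n = 1 := by
  rw [eFun, show (2 * Real.pi * Complex.I : ℂ) * (n : ℝ) = n * (2 * Real.pi * Complex.I) by
    push_cast; ring]
  exact Complex.exp_int_mul_two_pi_mul_I n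

lemma eFun_add_intCast (x : ℝ) (n : ℤ) : eFun (x + n) = eFun x := by
  rw [eFun_add, eFun_intCast, mul_one]

lemma eFun_eq_of_sub_eq_intCast {x y : ℝ} {n : ℤ} (h : x - y = n) : eFun x = eFun y := by
  rw [← eFun_add_intCast y n, ← h, add_sub_cancel]

/-- The Zak transform `Z_m Φ (x, y) = ∑ₖ Φ(y + k) e(mkx)`. -/
noncomputable def zak (m : ℤ) (Φ : ℝ → ℂ) (x y : ℝ) : ℂ :=
  ∑' k : ℤ, Φ (y + k) * eFun (m * k * x)

lemma zak_add_intCast (m : ℤ) (Φ : ℝ → ℂ) (x y : ℝ) (a b : ℤ) :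
    zak m Φ (a + x) (b + y) = eFun (-(m * b * x)) * zak m Φ x y := by
  rw [zak, zak, ← tsum_mul_left]
  conv_rhs => rw [← (Equiv.addRight b).tsum_eq]
  refine tsum_congr fun k => ?_
  have hΦ : b + y + k = y + ((k + b : ℤ) : ℝ) := by push_cast; ring
  have he : eFun (m * k * (a + x)) = eFun (-(m * b * x)) * eFun (m * ((k + b : ℤ) : ℝ) * x) := by
    rw [← eFun_add]
    exact eFun_eq_of_sub_eq_intCast (n := m * k * a) (by push_cast; ring)
  rw [Equiv.coe_addRight, hΦ, he]
  ring

noncomputable def zakHeisenberg (m j : ℤ) (Φ : ℝ → ℂ) (g : Heisenberg) : ℂ :=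
  eFun (m * g.z + j * g.x) * zak m Φ g.x g.y

lemma zakHeisenberg_mul_of_mem {γ : Heisenberg} (hγ : γ ∈ HeisenbergGamma) (m j : ℤ)
    (Φ : ℝ → ℂ) (g : Heisenberg) : zakHeisenberg m j Φ (γ * g) = zakHeisenberg m j Φ g := by
  obtain ⟨⟨a, ha⟩, ⟨b, hb⟩, ⟨c, hc⟩⟩ := hγ
  have hprefactor : eFun (m * (γ * g).z + j * (γ * g).x) * eFun (-(m * b * g.x)) =
      eFun (m * g.z + j * g.x) := by
    rw [← eFun_add]
    refine eFun_eq_of_sub_eq_intCast (n := m * c + j * a) ?_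
    simp only [Heisenberg.mul_x, Heisenberg.mul_z, ha, hb, hc]
    push_cast
    ring
  have hzak : zak m Φ (γ * g).x (γ * g).y = eFun (-(m * b * g.x)) * zak m Φ g.x g.y := by
    rw [Heisenberg.mul_x, Heisenberg.mul_y, ha, hb, zak_add_intCast]
  rw [zakHeisenberg, zakHeisenberg, hzak, ← mul_assoc, hprefactor]

lemma psiMJ_eq_zakHeisenberg (m j : ℕ) :
    psiMJ m j = zakHeisenberg m j (fun t => Real.exp (-Real.pi * (t + (j : ℝ) / m) ^ 2)) := by
  ext g
  simp only [psiMJ, zakHeisenberg, zak, Int.cast_natCast]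

lemma psiStarMJ_eq_zakHeisenberg (m j : ℕ) :
    psiStarMJ m j = fun g => Complex.I * zakHeisenberg m j (fun t =>
      Real.exp (-Real.pi * (t + (j : ℝ) / m + 1 / 2) ^ 2) * eFun (1 / 2 * (t + (j : ℝ) / m))) g := by
  ext g
  simp only [psiStarMJ, zakHeisenberg, zak, Int.cast_natCast, eFun_add, mul_assoc]

theorem psiMJ_psiStarMJ_left_invariant_general
    (m j : ℕ)
    (γ : Heisenberg) (hγ : γ ∈ HeisenbergGamma) (g : Heisenberg) :
    psiMJ m j (γ * g) = psiMJ m j g ∧ psiStarMJ m j (γ * g) = psiStarMJ m j g := by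
  rw [psiMJ_eq_zakHeisenberg, psiStarMJ_eq_zakHeisenberg]
  exact ⟨zakHeisenberg_mul_of_mem hγ .., congrArg _ (zakHeisenberg_mul_of_mem hγ ..)⟩

/-- **`Γ`-invariance of `ψ_{mj}` and `ψ*_{mj}`**: for `m ≥ 1` and `0 ≤ j ≤ m−1`,
the functions `ψ_{mj}` and `ψ*_{mj}` on the Heisenberg group are invariant under
left multiplication by elements of `Γ`, hence descend to `Γ\G`. -/
theorem psiMJ_psiStarMJ_left_invariant
    (m j : ℕ) (hm : 1 ≤ m) (hj : j < m)
    (γ : Heisenberg) (hγ : γ ∈ HeisenbergGamma) (g : Heisenberg) :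
    psiMJ m j (γ * g) = psiMJ m j g ∧ psiStarMJ m j (γ * g) = psiStarMJ m j g :=
  psiMJ_psiStarMJ_left_invariant_general m j γ hγ g
end
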